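/- arXiv:0912.1686 — 5 statements merged into one kernel-verified Lean document; each statement's English description precedes it below -/
import Mathlib

section
/- The map sending a chamber of the graphical arrangement B_G (consisting of hyperplanes x_i = x_j for edges {i,j} of G) to the orientation of G directing edge {i,j} as j → i whenever x_i > x_j on the chamber, is a bijection between the chambers of B_G and the acyclic orientations of G. -/
/-- `o` is an orientation of the simple graph `G`. -/
def IsOrientation {V : Type*} (G : SimpleGraph V) (o : V → V → Bool) : Prop :=
  (∀ i j, o i j = true → G.Adj i j) ∧
    (∀ i j, G.Adj i j → (o i j = true ↔ ¬ o j i = true))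

/-- An acyclic orientation: an orientation with no directed cycle. -/
def IsAcyclicOrientation {V : Type*} (G : SimpleGraph V) (o : V → V → Bool) : Prop :=
  IsOrientation G o ∧ ∀ v, ¬ Relation.TransGen (fun a b => o a b = true) v v

section Aux

variable {n : ℕ} (G : SimpleGraph (Fin n))

open Classical in
/-- orientation induced by a point -/
noncomputable def orientOf (x : Fin n → ℝ) : Fin n → Fin n → Bool :=
  fun a b => decide (G.Adj a b ∧ x a < x b)

lemma orientOf_acyclic (x : Fin n → ℝ) (hx : ∀ i j, G.Adj i j → x i ≠ x j) :
    IsAcyclicOrientation G (orientOf G x) := by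
  classical
  have hlt : ∀ a b, orientOf G x a b = true → x a < x b := by
    intro a b h
    simpa [orientOf] using (of_decide_eq_true h).2
  refine ⟨⟨fun a b h => (of_decide_eq_true h).1, ?_⟩, ?_⟩
  · intro i j hij
    constructor
    · intro h hji
      exact absurd (hlt _ _ hji) (not_lt.2 (hlt _ _ h).le)
    · intro h
      rcases (hx i j hij).lt_or_gt with hl | hl
      · simp [orientOf, hij, hl]
      · exact absurd (by simp [orientOf, hij.symm, hl]) h
  · intro v hv
    have : x v < x v := by
      have : ∀ a b, Relation.TransGen (fun a b => orientOf G x a b = true) a b → x a < x b := by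
        intro a b h
        induction h with
        | single h => exact hlt _ _ h
        | tail _ h ih => exact ih.trans (hlt _ _ h)
      exact this _ _ hv
    exact lt_irrefl _ this

lemma isOpen_chambers :
    IsOpen {x : Fin n → ℝ | ∀ i j, G.Adj i j → x i ≠ x j} := by
  have : {x : Fin n → ℝ | ∀ i j, G.Adj i j → x i ≠ x j}
      = ⋂ i, ⋂ j, {x : Fin n → ℝ | G.Adj i j → x i ≠ x j} := by
    ext x; simp [Set.mem_iInter]
  rw [this]
  refine isOpen_iInter_of_finite fun i => isOpen_iInter_of_finite fun j => ?_
  by_cases h : G.Adj i j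
  · have : {x : Fin n → ℝ | G.Adj i j → x i ≠ x j}
        = (fun x : Fin n → ℝ => x i - x j) ⁻¹' ({0}ᶜ) := by
      ext x; simp [h, sub_ne_zero]
    rw [this]
    exact isOpen_compl_singleton.preimage (by fun_prop)
  · simp [h]

lemma combo_lt {a b c d t : ℝ} (h1 : a < b) (h2 : c < d) (ht0 : 0 ≤ t) (ht1 : t ≤ 1) :
    (1 - t) * a + t * c < (1 - t) * b + t * d := by
  rcases lt_or_eq_of_le ht1 with h | h
  · nlinarith
  · rw [h]; simpa using h2

/-- Joined points induce equal orientations. -/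
lemma joined_orient_eq (x y : {x : Fin n → ℝ // ∀ i j, G.Adj i j → x i ≠ x j})
    (h : Joined x y) : orientOf G x.1 = orientOf G y.1 := by
  obtain ⟨γ⟩ := h
  have key : ∀ a b, G.Adj a b → x.1 a < x.1 b → y.1 a < y.1 b := by
    intro a b hab hx
    by_contra hy
    have hy' : y.1 b < y.1 a := lt_of_le_of_ne (not_lt.1 hy) (y.2 b a hab.symm)
    set f : unitInterval → ℝ := fun t => ((γ t).1 b - (γ t).1 a) with hf
    have hfc : Continuous f := by
      have h1 : Continuous fun t : unitInterval => ((γ t) : Fin n → ℝ) :=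
        continuous_subtype_val.comp γ.continuous
      exact ((continuous_apply b).comp h1).sub ((continuous_apply a).comp h1)
    have h0 : (0 : ℝ) ∈ Set.Icc (f 1) (f 0) := by
      constructor
      · simp [hf, γ.target]; linarith
      · simp [hf, γ.source]; linarith
    obtain ⟨t, ht⟩ := intermediate_value_univ (1 : unitInterval) 0 hfc h0
    exact (γ t).2 b a hab.symm (by have := sub_eq_zero.1 ht; linarith)
  funext a b
  by_cases hab : G.Adj a b
  · rcases (x.2 a b hab).lt_or_gt with hl | hl
    · have := key a b hab hl
      simp [orientOf, hab, hl, this]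
    · have := key b a hab.symm hl
      simp [orientOf, hl.not_gt, this.not_gt]
  · simp [orientOf, hab]

/-- Points with equal orientations are joined. -/
lemma orient_eq_joined (x y : {x : Fin n → ℝ // ∀ i j, G.Adj i j → x i ≠ x j})
    (h : orientOf G x.1 = orientOf G y.1) : Joined x y := by
  have sign : ∀ a b, G.Adj a b → x.1 a < x.1 b → y.1 a < y.1 b := by
    intro a b hab hx
    classical
    have hx' : orientOf G x.1 a b = true := by simp [orientOf, hab, hx]
    rw [h] at hx'
    exact (of_decide_eq_true hx').2
  refine ⟨⟨⟨fun t => ⟨fun i => (1 - t.1) * x.1 i + t.1 * y.1 i, ?_⟩, ?_⟩, ?_, ?_⟩⟩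
  · intro i j hij
    rcases (x.2 i j hij).lt_or_gt with hl | hl
    · exact (combo_lt hl (sign i j hij hl) t.2.1 t.2.2).ne
    · exact (combo_lt hl (sign j i hij.symm hl) t.2.1 t.2.2).ne'
  · refine Continuous.subtype_mk ?_ _
    fun_prop
  · ext i; simp
  · ext i; simp

open Classical in
/-- a canonical point for an acyclic orientation -/
noncomputable def pointOf (o : Fin n → Fin n → Bool) : Fin n → ℝ := fun a =>
  ((Finset.univ.filter
      (fun c => Relation.TransGen (fun a b => o a b = true) c a)).card : ℝ)

lemma pointOf_lt {o : Fin n → Fin n → Bool} (ho : IsAcyclicOrientation G o)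
    {a b : Fin n} (hab : o a b = true) : pointOf o a < pointOf o b := by
  classical
  unfold pointOf
  rw [Nat.cast_lt]
  apply Finset.card_lt_card
  constructor
  · intro c hc
    simp only [Finset.mem_filter, Finset.mem_univ, true_and] at hc ⊢
    exact hc.tail hab
  · intro hsub
    have ha : a ∈ Finset.univ.filter
        (fun c => Relation.TransGen (fun a b => o a b = true) c b) := by
      simp only [Finset.mem_filter, Finset.mem_univ, true_and]
      exact Relation.TransGen.single hab
    have := hsub ha
    simp only [Finset.mem_filter, Finset.mem_univ, true_and] at this
    exact ho.2 a this

lemma pointOf_mem {o : Fin n → Fin n → Bool} (ho : IsAcyclicOrientation G o) :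
    ∀ i j, G.Adj i j → pointOf o i ≠ pointOf o j := by
  intro i j hij
  by_cases h : o i j = true
  · exact (pointOf_lt G ho h).ne
  · have : o j i = true := by
      have := (ho.1.2 i j hij).not.mp (by simpa using h)
      simpa using this
    exact (pointOf_lt G ho this).ne'

lemma orientOf_pointOf {o : Fin n → Fin n → Bool} (ho : IsAcyclicOrientation G o) :
    orientOf G (pointOf o) = o := by
  classical
  funext a b
  by_cases h : o a b = true
  · simp [orientOf, ho.1.1 a b h, pointOf_lt G ho h, h]
  · have hb : o a b = false := by simpa using h
    rw [hb]
    apply decide_eq_false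
    rintro ⟨hadj, hlt⟩
    have : o b a = true := by
      have := (ho.1.2 a b hadj).not.mp (by simpa using h)
      simpa using this
    exact absurd (pointOf_lt G ho this) (not_lt.2 hlt.le)

end Aux

/-- The chambers of the graphical arrangement of `G` (connected components of the
complement in `ℝⁿ` of the union of the hyperplanes `xᵢ = xⱼ` over edges `{i,j}` of
`G`) are in bijection with the acyclic orientations of `G`, the bijection sending
a chamber to the orientation directing the edge `{i, j}` as `j → i` whenever
`x_i > x_j` holds on the chamber. -/
theorem stmt4 (n : ℕ) (G : SimpleGraph (Fin n)) :
    ∃ Φ : ConnectedComponents {x : Fin n → ℝ // ∀ i j, G.Adj i j → x i ≠ x j}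
      ≃ {o : Fin n → Fin n → Bool // IsAcyclicOrientation G o},
      ∀ (x : {x : Fin n → ℝ // ∀ i j, G.Adj i j → x i ≠ x j}) (i j : Fin n),
        G.Adj i j →
          ((Φ (ConnectedComponents.mk x)).1 j i = true ↔ x.1 j < x.1 i) := by
  classical
  haveI : LocallyPathConnectedSpace {x : Fin n → ℝ // ∀ i j, G.Adj i j → x i ≠ x j} :=
    (isOpen_chambers G).locallyPathConnectedSpace
  set f : {x : Fin n → ℝ // ∀ i j, G.Adj i j → x i ≠ x j} →
      {o : Fin n → Fin n → Bool // IsAcyclicOrientation G o} :=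
    fun x => ⟨orientOf G x.1, orientOf_acyclic G x.1 x.2⟩ with hfdef
  have hwd : ∀ x y, connectedComponent x = connectedComponent y → f x = f y := by
    intro x y hxy
    have hmem : y ∈ connectedComponent x := hxy ▸ mem_connectedComponent
    rw [← pathComponent_eq_connectedComponent] at hmem
    exact Subtype.ext (joined_orient_eq G x y hmem)
  set F : ConnectedComponents {x : Fin n → ℝ // ∀ i j, G.Adj i j → x i ≠ x j} →
      {o : Fin n → Fin n → Bool // IsAcyclicOrientation G o} :=
    Quotient.lift f hwd with hFdef
  have hbij : Function.Bijective F := by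
    constructor
    · rintro ⟨x⟩ ⟨y⟩ hxy
      have hxy' : orientOf G x.1 = orientOf G y.1 := congrArg Subtype.val hxy
      have hj : Joined x y := orient_eq_joined G x y hxy'
      exact Quotient.sound (connectedComponent_eq
        (pathComponent_subset_component x hj))
    · rintro ⟨o, ho⟩
      refine ⟨ConnectedComponents.mk ⟨pointOf o, pointOf_mem G ho⟩, ?_⟩
      exact Subtype.ext (orientOf_pointOf G ho)
  refine ⟨Equiv.ofBijective F hbij, ?_⟩
  intro x i j hij
  show orientOf G x.1 j i = true ↔ x.1 j < x.1 i
  simp [orientOf, hij.symm]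
end

section
/- Let w₁,…,w_n be positive reals summing to 1, let K be the Tsetlin library transition matrix on S_n (K(τ, τ') = w_i if τ' is obtained from τ by moving entry i to the front, 0 otherwise), and let π be the Luce model distribution π(τ) = ∏_{j=1}^{n−1} w_{τ(j)} / (1 − w_{τ(1)} − ⋯ − w_{τ(j−1)}). Then π is stationary for K: for all τ', ∑_τ π(τ) K(τ, τ') = π(τ'). -/
open Finset

/-- The Luce model distribution on `S_n`. -/
noncomputable def luce (n : ℕ) (w : Fin n → ℝ) (τ : Equiv.Perm (Fin n)) : ℝ :=
  ∏ j : Fin (n - 1),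
    w (τ (Fin.castLE (Nat.sub_le n 1) j)) /
      (1 - ∑ l ∈ Iio j, w (τ (Fin.castLE (Nat.sub_le n 1) l)))

/-- Moving the entry `i` of `τ` to the front: delete `i` from the one-line
notation of `τ` and prepend it.  If `p = τ⁻¹(i)` is the position of `i`, this is
`τ` composed with the inverse of the cycle `(0 1 … p)` of positions. -/
def moveToFront {n : ℕ} (τ : Equiv.Perm (Fin n)) (i : Fin n) : Equiv.Perm (Fin n) :=
  τ * (Fin.cycleRange (τ.symm i))⁻¹

/-- The Tsetlin library transition matrix: `K(τ, τ') = w_i` if `τ'` is obtained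
from `τ` by moving entry `i` to the front, and `0` otherwise. -/
noncomputable def tsetlinK (n : ℕ) (w : Fin n → ℝ)
    (τ τ' : Equiv.Perm (Fin n)) : ℝ :=
  ∑ i : Fin n, if τ' = moveToFront τ i then w i else 0

namespace TsetlinProof

/-- One-line notation weights of `τ`, extended by `0` beyond `n`. -/
noncomputable def U {n : ℕ} (w : Fin n → ℝ) (τ : Equiv.Perm (Fin n)) (j : ℕ) : ℝ :=
  if h : j < n then w (τ ⟨j, h⟩) else 0

lemma U_val {n : ℕ} (w : Fin n → ℝ) (τ : Equiv.Perm (Fin n)) (j : Fin n) :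
    U w τ j.val = w (τ j) := by simp [U]

/-- Partial sums. -/
noncomputable def T (u : ℕ → ℝ) (k : ℕ) : ℝ := ∑ j ∈ range k, u j

lemma luce_eq {n : ℕ} (w : Fin n → ℝ) (τ : Equiv.Perm (Fin n)) :
    luce n w τ = ∏ j ∈ range (n - 1), U w τ j / (1 - T (U w τ) j) := by
  rw [luce, ← Fin.prod_univ_eq_prod_range]
  refine Finset.prod_congr rfl fun j _ => ?_
  have h1 : U w τ (j : ℕ) = w (τ (Fin.castLE (Nat.sub_le n 1) j)) := by
    rw [← U_val w τ (Fin.castLE (Nat.sub_le n 1) j)]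
    rfl
  have h2 : T (U w τ) (j : ℕ) = ∑ l ∈ Iio j, w (τ (Fin.castLE (Nat.sub_le n 1) l)) := by
    rw [T, ← Nat.Iio_eq_range, ← Fin.map_valEmbedding_Iio, Finset.sum_map]
    refine Finset.sum_congr rfl fun l _ => ?_
    rw [Fin.valEmbedding_apply, ← U_val w τ (Fin.castLE (Nat.sub_le n 1) l)]
    rfl
  rw [h1, h2]

/-- The factor at position `j` of the Luce probability of `τ' * cycleRange p`. -/
noncomputable def Fj (u : ℕ → ℝ) (p j : ℕ) : ℝ :=
  if j < p then u (j + 1) / (1 - T u (j + 1) + u 0)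
  else if j = p then u 0 / (1 - T u (p + 1) + u 0)
  else u j / (1 - T u j)

noncomputable def D (u : ℕ → ℝ) (p : ℕ) : ℝ :=
  ∏ j ∈ range p, (1 - T u (j + 1)) / (1 - T u (j + 1) + u 0)

lemma telescope (n : ℕ) (u : ℕ → ℝ) (hT : T u (n + 1) = 1)
    (h1 : ∀ j, j < n + 1 → (0:ℝ) < 1 - T u j)
    (h2 : ∀ j, j ≤ n + 1 → (0:ℝ) < 1 - T u j + u 0) :
    u 0 * ∑ p ∈ range (n + 1), ∏ j ∈ range n, Fj u p j
      = ∏ j ∈ range n, u j / (1 - T u j) := by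
  have hTs : ∀ k, T u (k + 1) = T u k + u k := fun k => Finset.sum_range_succ _ k
  have hun : u n = 1 - T u n := by
    have := hTs n
    rw [hT] at this
    linarith
  have hu0pos : 0 < u 0 := by
    have := h2 (n + 1) le_rfl
    rw [hT] at this
    linarith
  have Dsucc : ∀ p, D u (p + 1) = D u p * ((1 - T u (p + 1)) / (1 - T u (p + 1) + u 0)) :=
    fun p => Finset.prod_range_succ _ p
  have hlast : ∀ p, p ≤ n → Fj u p n = 1 := by
    intro p hp
    rcases eq_or_lt_of_le hp with h | hp'
    · subst h
      rw [Fj, if_neg (lt_irrefl p), if_pos rfl, hT]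
      rw [show (1:ℝ) - 1 + u 0 = u 0 by ring, div_self hu0pos.ne']
    · have c1 : ¬ n < p := by omega
      have c2 : n ≠ p := by omega
      rw [Fj, if_neg c1, if_neg c2, ← hun, div_self]
      rw [hun]
      exact (h1 n (by omega)).ne'
  have hext : ∀ p, p ≤ n → ∏ j ∈ range (n + 1), Fj u p j = ∏ j ∈ range n, Fj u p j := by
    intro p hp
    rw [Finset.prod_range_succ, hlast p hp, mul_one]
  set L : ℝ := ∏ j ∈ range (n + 1), u j / (1 - T u j) with hL
  have hLext : L = ∏ j ∈ range n, u j / (1 - T u j) := by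
    rw [hL, Finset.prod_range_succ, ← hun, div_self, mul_one]
    rw [hun]
    exact (h1 n (by omega)).ne'
  have cancel : ∀ q, q ≤ n →
      D u q * ∏ j ∈ range q, u (j + 1) / (1 - T u (j + 1))
        = ∏ j ∈ range q, u (j + 1) / (1 - T u (j + 1) + u 0) := by
    intro q hq
    rw [D, ← Finset.prod_mul_distrib]
    refine Finset.prod_congr rfl fun j hj => ?_
    have hjq : j < q := Finset.mem_range.1 hj
    have hne : (1 - T u (j + 1)) ≠ 0 := (h1 (j + 1) (by omega)).ne'
    have hne2 : (1 - T u (j + 1) + u 0) ≠ 0 := (h2 (j + 1) (by omega)).ne'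
    field_simp
  have Lsplit : ∀ p, p ≤ n → D u p * L =
      u 0 * (∏ j ∈ range p, u (j + 1) / (1 - T u (j + 1) + u 0)) *
        ∏ j ∈ Ico (p + 1) (n + 1), u j / (1 - T u j) := by
    intro p hp
    rw [hL, ← Finset.prod_range_mul_prod_Ico (fun j => u j / (1 - T u j))
        (show p + 1 ≤ n + 1 by omega),
      Finset.prod_range_succ' (fun j => u j / (1 - T u j)) p]
    have hT0 : T u 0 = 0 := by simp [T]
    rw [hT0, sub_zero, div_one, ← mul_assoc]
    rw [show D u p * ((∏ j ∈ range p, u (j + 1) / (1 - T u (j + 1))) * u 0)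
        = u 0 * (D u p * ∏ j ∈ range p, u (j + 1) / (1 - T u (j + 1))) by ring,
      cancel p hp]
  have step : ∀ p, p ≤ n →
      u 0 * ∏ j ∈ range (n + 1), Fj u p j = D u p * L - D u (p + 1) * L := by
    intro p hp
    have hsplitF : ∏ j ∈ range (n + 1), Fj u p j =
        ((∏ j ∈ range p, u (j + 1) / (1 - T u (j + 1) + u 0)) *
          (u 0 / (1 - T u (p + 1) + u 0))) *
        ∏ j ∈ Ico (p + 1) (n + 1), u j / (1 - T u j) := by
      rw [← Finset.prod_range_mul_prod_Ico (fun j => Fj u p j)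
          (show p + 1 ≤ n + 1 by omega),
        Finset.prod_range_succ]
      congr 1
      · congr 1
        · refine Finset.prod_congr rfl fun j hj => ?_
          have hjp : j < p := Finset.mem_range.1 hj
          simp [Fj, hjp]
        · simp [Fj]
      · refine Finset.prod_congr rfl fun j hj => ?_
        have hj1 : p + 1 ≤ j := (Finset.mem_Ico.1 hj).1
        have hc1 : ¬ j < p := by omega
        have hc2 : j ≠ p := by omega
        simp [Fj, hc1, hc2]
    have hfrac : 1 - (1 - T u (p + 1)) / (1 - T u (p + 1) + u 0)
        = u 0 / (1 - T u (p + 1) + u 0) := by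
      have hne : (1 - T u (p + 1) + u 0) ≠ 0 := (h2 (p + 1) (by omega)).ne'
      field_simp
      ring
    calc u 0 * ∏ j ∈ range (n + 1), Fj u p j
        = (D u p * L) * (u 0 / (1 - T u (p + 1) + u 0)) := by
          rw [hsplitF, Lsplit p hp]; ring
      _ = (D u p * L) * (1 - (1 - T u (p + 1)) / (1 - T u (p + 1) + u 0)) := by rw [hfrac]
      _ = D u p * L - D u (p + 1) * L := by rw [Dsucc p]; ring
  have hsum2 : ∀ p ∈ range (n + 1), u 0 * ∏ j ∈ range n, Fj u p j
      = D u p * L - D u (p + 1) * L := by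
    intro p hp
    have hp' : p ≤ n := by have := Finset.mem_range.1 hp; omega
    rw [← hext p hp']
    exact step p hp'
  rw [Finset.mul_sum, Finset.sum_congr rfl hsum2, Finset.sum_range_sub' (fun p => D u p * L)]
  have hD0 : D u 0 = 1 := by simp [D]
  have hDN : D u (n + 1) = 0 := by
    rw [Dsucc n, hT]
    simp
  rw [hD0, hDN, one_mul, zero_mul, sub_zero, hLext]

section Main

variable {n : ℕ} (w : Fin (n + 1) → ℝ) (τ' : Equiv.Perm (Fin (n + 1)))

lemma Ue (p : Fin (n + 1)) (j : ℕ) (hj : j < n + 1) :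
    U w (τ' * Fin.cycleRange p) j =
      if j < p.val then U w τ' (j + 1) else if j = p.val then U w τ' 0 else U w τ' j := by
  have base : U w (τ' * Fin.cycleRange p) j
      = U w τ' ((Fin.cycleRange p ⟨j, hj⟩ : Fin (n + 1)).val) := by
    rw [U, dif_pos hj, U_val, Equiv.Perm.mul_apply]
  rcases lt_trichotomy j p.val with h | h | h
  · have hlt : (⟨j, hj⟩ : Fin (n + 1)) < p := h
    rw [base, Fin.coe_cycleRange_of_lt hlt, if_pos h]
  · have heq : (⟨j, hj⟩ : Fin (n + 1)) = p := Fin.ext h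
    have hne : ¬ j < p.val := by omega
    rw [base, heq, Fin.cycleRange_self, if_neg hne, if_pos h, Fin.val_zero]
  · have hgt : p < (⟨j, hj⟩ : Fin (n + 1)) := h
    have hne : ¬ j < p.val := by omega
    have hne2 : j ≠ p.val := by omega
    rw [base, Fin.cycleRange_of_gt hgt, if_neg hne, if_neg hne2]

lemma Ssum (p : Fin (n + 1)) (j : ℕ) (hj : j ≤ n + 1) :
    T (U w (τ' * Fin.cycleRange p)) j =
      if j ≤ p.val then T (U w τ') (j + 1) - U w τ' 0 else T (U w τ') j := by
  have hTs : ∀ k, T (U w τ') (k + 1) = T (U w τ') k + U w τ' k :=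
    fun k => Finset.sum_range_succ _ k
  induction j with
  | zero =>
    have h1 : T (U w τ') 1 = U w τ' 0 := by simp [T]
    simp [T, h1]
  | succ j ih =>
    have hj' : j ≤ n + 1 := by omega
    have hjlt : j < n + 1 := by omega
    rw [T, Finset.sum_range_succ, ← T, ih hj', Ue w τ' p j hjlt]
    rcases lt_trichotomy j p.val with h | h | h
    · have c1 : j ≤ p.val := by omega
      have c2 : j + 1 ≤ p.val := by omega
      rw [if_pos c1, if_pos h, if_pos c2, hTs (j + 1)]
      ring
    · have c1 : j ≤ p.val := by omega
      have nc : ¬ j < p.val := by omega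
      have nc2 : ¬ j + 1 ≤ p.val := by omega
      rw [if_pos c1, if_neg nc, if_pos h, if_neg nc2]
      ring
    · have nc1 : ¬ j ≤ p.val := by omega
      have nc : ¬ j < p.val := by omega
      have ne' : j ≠ p.val := by omega
      have nc2 : ¬ j + 1 ≤ p.val := by omega
      rw [if_neg nc1, if_neg nc, if_neg ne', if_neg nc2, hTs j]

lemma luce_sigma (p : Fin (n + 1)) :
    luce (n + 1) w (τ' * Fin.cycleRange p) = ∏ j ∈ range n, Fj (U w τ') p.val j := by
  rw [luce_eq]
  have hn : (n + 1) - 1 = n := rfl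
  rw [hn]
  refine Finset.prod_congr rfl fun j hj => ?_
  have hjn : j < n := Finset.mem_range.1 hj
  rw [Ue w τ' p j (by omega), Ssum w τ' p j (by omega)]
  rcases lt_trichotomy j p.val with h | h | h
  · have c1 : j ≤ p.val := by omega
    rw [if_pos h, if_pos c1]
    simp only [Fj, if_pos h]
    ring_nf
  · have c1 : j ≤ p.val := by omega
    have nc : ¬ j < p.val := by omega
    rw [if_neg nc, if_pos h, if_pos c1]
    simp only [Fj, if_neg nc, if_pos h]
    rw [h]
    ring_nf
  · have nc1 : ¬ j ≤ p.val := by omega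
    have nc : ¬ j < p.val := by omega
    have ne' : j ≠ p.val := by omega
    rw [if_neg nc, if_neg ne', if_neg nc1]
    simp only [Fj, if_neg nc, if_neg ne']

lemma key (hw : ∀ i, 0 < w i) (hsum : ∑ i, w i = 1) :
    w (τ' 0) * ∑ p : Fin (n + 1), luce (n + 1) w (τ' * Fin.cycleRange p)
      = luce (n + 1) w τ' := by
  set u : ℕ → ℝ := U w τ' with hu
  have hu0 : u 0 = w (τ' 0) := U_val w τ' 0
  have hpos : ∀ j, j < n + 1 → 0 < u j := by
    intro j hj
    rw [hu, U, dif_pos hj]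
    exact hw _
  have hnonneg : ∀ j, 0 ≤ u j := by
    intro j
    by_cases hj : j < n + 1
    · exact (hpos j hj).le
    · rw [hu, U, dif_neg hj]
  have hT : T u (n + 1) = 1 := by
    rw [T, ← Fin.sum_univ_eq_sum_range (fun j => u j) (n + 1)]
    calc ∑ j : Fin (n + 1), u j.val = ∑ j : Fin (n + 1), w (τ' j) :=
          Finset.sum_congr rfl fun j _ => U_val w τ' j
      _ = ∑ i, w i := Equiv.sum_comp τ' w
      _ = 1 := hsum
  have Tmono : ∀ a b : ℕ, a ≤ b → T u a ≤ T u b := by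
    intro a b hab
    exact Finset.sum_le_sum_of_subset_of_nonneg (Finset.range_subset_range.2 hab)
      (fun j _ _ => hnonneg j)
  have h1 : ∀ j, j < n + 1 → (0:ℝ) < 1 - T u j := by
    intro j hj
    have h := Tmono (j + 1) (n + 1) (by omega)
    have hTs : T u (j + 1) = T u j + u j := Finset.sum_range_succ _ j
    have := hpos j hj
    rw [hTs, hT] at h
    linarith
  have h2 : ∀ j, j ≤ n + 1 → (0:ℝ) < 1 - T u j + u 0 := by
    intro j hj
    have h := Tmono j (n + 1) hj
    rw [hT] at h
    have := hpos 0 (by omega)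
    linarith
  have hconv : ∑ p : Fin (n + 1), luce (n + 1) w (τ' * Fin.cycleRange p)
      = ∑ p ∈ range (n + 1), ∏ j ∈ range n, Fj u p j := by
    rw [← Fin.sum_univ_eq_sum_range (fun p => ∏ j ∈ range n, Fj u p j) (n + 1)]
    exact Finset.sum_congr rfl fun p _ => luce_sigma w τ' p
  rw [hconv, ← hu0, telescope n u hT h1 h2, luce_eq w τ',
    show n + 1 - 1 = n from rfl, hu]

lemma cycleRange_inv_zero (p : Fin (n + 1)) : (Fin.cycleRange p)⁻¹ 0 = p := by
  rw [Equiv.Perm.inv_def, Equiv.symm_apply_eq, Fin.cycleRange_self]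

lemma moveToFront_apply_zero (τ : Equiv.Perm (Fin (n + 1))) (i : Fin (n + 1)) :
    moveToFront τ i 0 = i := by
  rw [moveToFront, Equiv.Perm.mul_apply, cycleRange_inv_zero, Equiv.apply_symm_apply]

lemma mtf_iff (τ : Equiv.Perm (Fin (n + 1))) :
    τ' = moveToFront τ (τ' 0) ↔ ∃ p : Fin (n + 1), τ = τ' * Fin.cycleRange p := by
  constructor
  · intro h
    refine ⟨τ.symm (τ' 0), ?_⟩
    have key : moveToFront τ (τ' 0) * Fin.cycleRange (τ.symm (τ' 0)) = τ := by
      rw [moveToFront]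
      exact inv_mul_cancel_right τ (Fin.cycleRange (τ.symm (τ' 0)))
    rw [← h] at key
    exact key.symm
  · rintro ⟨p, rfl⟩
    have hp : (τ' * Fin.cycleRange p).symm (τ' 0) = p := by
      rw [Equiv.Perm.mul_def, Equiv.symm_trans_apply]
      rw [show τ'.symm (τ' 0) = 0 from τ'.symm_apply_apply 0]
      rw [← Equiv.Perm.inv_def, cycleRange_inv_zero]
    rw [moveToFront, hp, mul_inv_cancel_right]

lemma cycleRange_injective :
    Function.Injective (fun p : Fin (n + 1) => τ' * Fin.cycleRange p) := by
  intro p q h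
  simp only [mul_right_cancel_iff, mul_left_cancel_iff] at h
  have h2 : Fin.cycleRange q p = 0 := by
    rw [← h, Fin.cycleRange_self]
  have h3 : Fin.cycleRange q q = 0 := Fin.cycleRange_self q
  exact (Fin.cycleRange q).injective (h2.trans h3.symm)

end Main

end TsetlinProof

open TsetlinProof in
/-- The Luce model distribution is stationary for the Tsetlin library chain. -/
theorem stmt9 (n : ℕ) (w : Fin n → ℝ) (hw : ∀ i, 0 < w i) (hsum : ∑ i, w i = 1) :
    ∀ τ' : Equiv.Perm (Fin n),
      ∑ τ : Equiv.Perm (Fin n), luce n w τ * tsetlinK n w τ τ' = luce n w τ' := by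
  obtain ⟨m, rfl⟩ : ∃ m, n = m + 1 := by
    cases n with
    | zero => simp at hsum
    | succ m => exact ⟨m, rfl⟩
  intro τ'
  have step1 : ∑ τ : Equiv.Perm (Fin (m + 1)), luce (m + 1) w τ * tsetlinK (m + 1) w τ τ'
      = ∑ i : Fin (m + 1), ∑ τ : Equiv.Perm (Fin (m + 1)),
          luce (m + 1) w τ * if τ' = moveToFront τ i then w i else 0 := by
    rw [Finset.sum_comm]
    refine Finset.sum_congr rfl fun τ _ => ?_
    rw [tsetlinK, Finset.mul_sum]
  rw [step1]
  rw [Finset.sum_eq_single (τ' 0)]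
  rotate_left
  · intro i _ hi
    refine Finset.sum_eq_zero fun τ _ => ?_
    rw [if_neg, mul_zero]
    intro h
    apply hi
    rw [h, moveToFront_apply_zero]
  · intro h
    exact absurd (Finset.mem_univ _) h
  have step2 : ∑ τ : Equiv.Perm (Fin (m + 1)),
      luce (m + 1) w τ * (if τ' = moveToFront τ (τ' 0) then w (τ' 0) else 0)
      = ∑ τ ∈ Finset.univ.filter (fun τ => τ' = moveToFront τ (τ' 0)),
          luce (m + 1) w τ * w (τ' 0) := by
    rw [Finset.sum_filter]
    exact Finset.sum_congr rfl fun τ _ => by rw [mul_ite, mul_zero]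
  rw [step2]
  have hset : Finset.univ.filter (fun τ => τ' = moveToFront τ (τ' 0))
      = Finset.univ.image (fun p : Fin (m + 1) => τ' * Fin.cycleRange p) := by
    ext τ
    simp only [Finset.mem_filter, Finset.mem_univ, true_and, Finset.mem_image]
    rw [mtf_iff τ' τ]
    constructor
    · rintro ⟨p, hp⟩; exact ⟨p, hp.symm⟩
    · rintro ⟨p, hp⟩; exact ⟨p, hp.symm⟩
  rw [hset, Finset.sum_image (fun p _ q _ h => cycleRange_injective τ' h)]
  rw [← Finset.sum_mul, mul_comm]
  exact key w τ' hw hsum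
end

section
/- For the nearest-neighbor cube walk on {−,+}ⁿ with weights w_i^ε, the transition matrix K has, for each subset S ⊆ [n], the eigenvalue λ_S = ∑_{i ∉ S} w_i, where w_i = w_i^− + w_i^+; moreover K is diagonalizable and its characteristic polynomial is ∏_{S ⊆ [n]} (x − λ_S). -/
open Finset Polynomial

/-- The transition matrix of the nearest-neighbor cube walk on `{-,+}ⁿ`. -/
def cubeK (n : ℕ) (wp wm : Fin n → ℝ) :
    Matrix (Fin n → Bool) (Fin n → Bool) ℝ := fun x x' =>
  ∑ i : Fin n,
    ((if x' = Function.update x i true then wp i else 0) +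
      (if x' = Function.update x i false then wm i else 0))

section Aux

variable {m R : Type*} [Fintype m] [DecidableEq m] [CommRing R]

lemma charmatrix_diagonal' (d : m → R) :
    Matrix.charmatrix (Matrix.diagonal d) = Matrix.diagonal (fun i => X - C (d i)) := by
  apply Matrix.ext
  intro i j
  by_cases h : i = j
  · subst h; rw [Matrix.charmatrix_apply_eq]; simp
  · rw [Matrix.charmatrix_apply_ne _ _ _ h, Matrix.diagonal_apply_ne _ h,
      Matrix.diagonal_apply_ne _ h, map_zero, neg_zero]

lemma charpoly_diagonal' (d : m → R) :
    (Matrix.diagonal d).charpoly = ∏ i, (X - C (d i)) := by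
  rw [Matrix.charpoly, charmatrix_diagonal', Matrix.det_diagonal]

lemma charpoly_conj' (P D Q : Matrix m m R) (hPQ : P * Q = 1) (hQP : Q * P = 1) :
    (P * D * Q).charpoly = D.charpoly := by
  have hmap : ∀ A B : Matrix m m R,
      (A * B).map (C : R → R[X]) = A.map (C : R → R[X]) * B.map (C : R → R[X]) := by
    intro A B
    exact Matrix.map_mul (f := (C : R →+* R[X]))
  have hcomm : ∀ A : Matrix m m R,
      A.map (C : R → R[X]) * Matrix.scalar m (X : R[X])
        = Matrix.scalar m (X : R[X]) * A.map (C : R → R[X]) := by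
    intro A
    exact (Matrix.scalar_commute (X : R[X]) (fun r => Commute.all _ _) _).symm
  have hchar : Matrix.charmatrix (P * D * Q)
      = P.map (C : R → R[X]) * Matrix.charmatrix D * Q.map (C : R → R[X]) := by
    have : (P * Q).map (C : R → R[X]) = 1 := by rw [hPQ]; simp
    simp only [Matrix.charmatrix, RingHom.mapMatrix_apply]
    rw [mul_sub, sub_mul, ← hmap, ← hmap, hcomm P]
    congr 1
    rw [Matrix.mul_assoc, ← hmap, hPQ,
      show ((1 : Matrix m m R).map (C : R → R[X])) = 1 from
        Matrix.map_one _ (map_zero C) (map_one C), Matrix.mul_one]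
  have hdet1 : (P.map (C : R → R[X])).det * (Q.map (C : R → R[X])).det = 1 := by
    rw [← Matrix.det_mul, ← hmap, hPQ]
    simp
  rw [Matrix.charpoly, Matrix.charpoly, hchar, Matrix.det_mul, Matrix.det_mul]
  ring_nf
  calc (P.map (C : R → R[X])).det * (Matrix.charmatrix D).det * (Q.map (C : R → R[X])).det
      = (Matrix.charmatrix D).det
        * ((P.map (C : R → R[X])).det * (Q.map (C : R → R[X])).det) := by ring
    _ = (Matrix.charmatrix D).det := by rw [hdet1, mul_one]

end Aux

/-- For the nearest-neighbor cube walk with nonnegative weights `w_i^ε` summing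
to `1`, and `w_i := w_i^- + w_i^+`: for each `S ⊆ [n]`, `λ_S = ∑_{i ∉ S} w_i` is
an eigenvalue of `K`; moreover `K` is diagonalizable and its characteristic
polynomial is `∏_{S ⊆ [n]} (x - λ_S)`. -/
theorem stmt11 (n : ℕ) (wp wm : Fin n → ℝ)
    (hwp : ∀ i, 0 ≤ wp i) (hwm : ∀ i, 0 ≤ wm i)
    (hsum : ∑ i, (wp i + wm i) = 1) :
    (∀ S : Finset (Fin n), (∑ i ∈ Sᶜ, (wp i + wm i)) ∈ spectrum ℝ (cubeK n wp wm)) ∧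
    (cubeK n wp wm).charpoly
        = ∏ S : Finset (Fin n), (X - C (∑ i ∈ Sᶜ, (wp i + wm i))) ∧
    (∃ (P : Matrix (Fin n → Bool) (Fin n → Bool) ℝ) (d : (Fin n → Bool) → ℝ),
      IsUnit P.det ∧ cubeK n wp wm = P * Matrix.diagonal d * P⁻¹) := by
  classical
  -- eigenvector data for each coordinate
  set t : Fin n → Bool → ℝ := fun i b =>
    if wp i + wm i = 0 then (if b then 1 else -1) else (if b then wm i else -(wp i)) with ht
  have ht0 : ∀ i, wp i * t i true + wm i * t i false = 0 := by
    intro i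
    by_cases h : wp i + wm i = 0
    · have h1 : wp i = 0 := le_antisymm (by linarith [hwm i]) (hwp i)
      have h2 : wm i = 0 := by linarith
      simp [ht, h, h1, h2]
    · simp [ht, h]
      ring
  have htd : ∀ i, t i true - t i false ≠ 0 := by
    intro i
    by_cases h : wp i + wm i = 0
    · simp [ht, h]
    · simp only [ht, if_neg h]
      simp only [if_true, Bool.false_eq_true, if_false]
      intro hc
      exact h (by linarith)
  set P : Matrix (Fin n → Bool) (Fin n → Bool) ℝ :=
    fun x S => ∏ i, (if S i then t i (x i) else 1) with hP
  set Q : Matrix (Fin n → Bool) (Fin n → Bool) ℝ :=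
    fun S y => ∏ i, ((if S i then (if y i then 1 else -1)
        else (if y i then -(t i false) else t i true)) / (t i true - t i false)) with hQ
  set d : (Fin n → Bool) → ℝ := fun S => ∑ i, (if S i then 0 else (wp i + wm i)) with hd
  -- key 2×2 computation
  have key : ∀ (i : Fin n) (a c : Bool),
      (∑ b : Bool, (if b then t i a else 1)
        * ((if b then (if c then 1 else -1)
          else (if c then -(t i false) else t i true)) / (t i true - t i false)))
      = if a = c then 1 else 0 := by
    intro i a c
    have hdne := htd i
    rw [Fintype.sum_bool]
    cases a <;> cases c <;>
      simp only [if_true, if_false, Bool.true_eq_false, Bool.false_eq_true] <;>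
      field_simp <;> ring
  have hPQ : P * Q = 1 := by
    ext x y
    rw [Matrix.mul_apply]
    have step1 : ∀ S : Fin n → Bool, P x S * Q S y
        = ∏ i, ((if S i then t i (x i) else 1)
          * ((if S i then (if y i then 1 else -1)
            else (if y i then -(t i false) else t i true)) / (t i true - t i false))) := by
      intro S
      rw [hP, hQ]
      exact (Finset.prod_mul_distrib).symm
    calc (∑ S : Fin n → Bool, P x S * Q S y)
        = ∑ S : Fin n → Bool, ∏ i, ((if S i then t i (x i) else 1)
          * ((if S i then (if y i then 1 else -1)
            else (if y i then -(t i false) else t i true)) / (t i true - t i false))) := by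
          exact Finset.sum_congr rfl fun S _ => step1 S
      _ = ∏ i, ∑ b : Bool, ((if b then t i (x i) else 1)
          * ((if b then (if y i then 1 else -1)
            else (if y i then -(t i false) else t i true)) / (t i true - t i false))) := by
          rw [Fintype.prod_sum]
      _ = ∏ i, (if x i = y i then (1:ℝ) else 0) := by
          exact Finset.prod_congr rfl fun i _ => key i (x i) (y i)
      _ = (1 : Matrix (Fin n → Bool) (Fin n → Bool) ℝ) x y := by
          rw [Matrix.one_apply]
          by_cases h : x = y
          · subst h; simp
          · rw [if_neg h]
            obtain ⟨i, hi⟩ := Function.ne_iff.mp h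
            exact Finset.prod_eq_zero (Finset.mem_univ i) (if_neg hi)
  have hQP : Q * P = 1 := mul_eq_one_comm.mp hPQ
  have hPinv : P⁻¹ = Q := Matrix.inv_eq_right_inv hPQ
  have hunit : IsUnit P.det := Matrix.isUnit_det_of_right_inverse hPQ
  -- eigenvalue equation : K * P = P * diagonal d
  have hupd : ∀ (x : Fin n → Bool) (S : Fin n → Bool) (i : Fin n) (b : Bool),
      P (Function.update x i b) S
        = (if S i then t i b else 1) * ∏ j ∈ Finset.univ.erase i, (if S j then t j (x j) else 1) := by
    intro x S i b
    rw [hP]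
    have hfun : (fun j => if S j then t j (Function.update x i b j) else 1)
        = Function.update (fun j => if S j then t j (x j) else 1) i (if S i then t i b else 1) := by
      funext j
      by_cases hj : j = i
      · subst hj; simp [Function.update_self]
      · simp [Function.update_of_ne hj]
    simp only
    rw [hfun, Finset.prod_update_of_mem (Finset.mem_univ i), Finset.sdiff_singleton_eq_erase]
  have hsplit : ∀ (x : Fin n → Bool) (S : Fin n → Bool) (i : Fin n),
      P x S = (if S i then t i (x i) else 1)
        * ∏ j ∈ Finset.univ.erase i, (if S j then t j (x j) else 1) := by
    intro x S i
    rw [hP]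
    exact (Finset.mul_prod_erase Finset.univ _ (Finset.mem_univ i)).symm
  have hKP : cubeK n wp wm * P = P * Matrix.diagonal d := by
    ext x S
    rw [Matrix.mul_apply, Matrix.mul_diagonal]
    have lhs1 : (∑ x' : Fin n → Bool, cubeK n wp wm x x' * P x' S)
        = ∑ i : Fin n, (wp i * P (Function.update x i true) S
            + wm i * P (Function.update x i false) S) := by
      unfold cubeK
      simp only [Finset.sum_mul]
      rw [Finset.sum_comm]
      refine Finset.sum_congr rfl fun i _ => ?_
      simp only [add_mul, ite_mul, zero_mul]
      rw [Finset.sum_add_distrib]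
      simp [Finset.sum_ite_eq']
    rw [lhs1]
    have term : ∀ i : Fin n,
        wp i * P (Function.update x i true) S + wm i * P (Function.update x i false) S
          = (if S i then 0 else wp i + wm i) * P x S := by
      intro i
      rw [hupd, hupd, hsplit x S i]
      set R := ∏ j ∈ Finset.univ.erase i, (if S j then t j (x j) else 1) with hR
      by_cases hSi : S i
      · simp only [hSi, if_true, zero_mul]
        have hcollect : wp i * (t i true * R) + wm i * (t i false * R)
            = (wp i * t i true + wm i * t i false) * R := by ring
        rw [hcollect, ht0 i, zero_mul]
      · simp only [hSi, Bool.false_eq_true, if_false]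
        ring
    rw [Finset.sum_congr rfl fun i _ => term i, ← Finset.sum_mul, hd, mul_comm]
  have hK : cubeK n wp wm = P * Matrix.diagonal d * P⁻¹ := by
    rw [hPinv]
    calc cubeK n wp wm = cubeK n wp wm * (P * Q) := by rw [hPQ, Matrix.mul_one]
      _ = (cubeK n wp wm * P) * Q := by rw [Matrix.mul_assoc]
      _ = P * Matrix.diagonal d * Q := by rw [hKP]
  -- reindexing lemma: d evaluated at indicator of S
  have hdval : ∀ S : Finset (Fin n),
      d (fun i => decide (i ∈ S)) = ∑ i ∈ Sᶜ, (wp i + wm i) := by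
    intro S
    rw [hd]
    simp only [decide_eq_true_eq]
    have : ∀ i : Fin n, (if i ∈ S then (0:ℝ) else wp i + wm i)
        = if i ∈ Sᶜ then wp i + wm i else 0 := by
      intro i; by_cases h : i ∈ S <;> simp [h]
    rw [Finset.sum_congr rfl fun i _ => this i, Finset.sum_ite_mem, Finset.univ_inter]
  -- the equivalence between subsets and boolean functions
  let e : Finset (Fin n) ≃ (Fin n → Bool) :=
    { toFun := fun S i => decide (i ∈ S)
      invFun := fun x => Finset.univ.filter (fun i => x i = true)
      left_inv := fun S => by ext i; simp
      right_inv := fun x => by funext i; simp }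
  refine ⟨?_, ?_, P, d, hunit, hK⟩
  · -- spectrum
    intro S
    let u : (Matrix (Fin n → Bool) (Fin n → Bool) ℝ)ˣ := ⟨P, Q, hPQ, hQP⟩
    have hspec : spectrum ℝ (cubeK n wp wm) = Set.range d := by
      rw [hK, hPinv]
      have h2 := spectrum.units_conjugate (R := ℝ) (a := Matrix.diagonal d) (u := u)
      have h1 : P * Matrix.diagonal d * Q
          = (u : Matrix (Fin n → Bool) (Fin n → Bool) ℝ) * Matrix.diagonal d
            * ((u⁻¹ : (Matrix (Fin n → Bool) (Fin n → Bool) ℝ)ˣ)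
              : Matrix (Fin n → Bool) (Fin n → Bool) ℝ) := rfl
      rw [h1, h2, spectrum_diagonal]
    rw [hspec]
    exact ⟨fun i => decide (i ∈ S), hdval S⟩
  · -- charpoly
    rw [hK, hPinv, charpoly_conj' P _ Q hPQ hQP, charpoly_diagonal']
    refine (Fintype.prod_equiv e _ _ fun S => ?_).symm
    simp only [e, Equiv.coe_fn_mk]
    rw [hdval S]
end

section
/- Let K be the transition matrix of the inverse a-shuffle chain on S_n (a ≥ 2). Then the eigenvalues of K are 1, 1/a, 1/a², …, 1/a^{n−1}, and the multiplicity of 1/a^i equals the number of permutations in S_n with exactly n − i cycles (the unsigned Stirling number of the first kind c(n, n−i)). -/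
open Polynomial

/-- `ν τ τ'` is the number of weak ordered partitions of `[n]` into `a` blocks
(encoded as functions `f : [n] → [a]`, the blocks being the fibers of `f`) whose
inverse-shuffle action on `τ` yields `τ'`.  The action sends `τ` to the unique
permutation `τ'` listing first the elements of `B₁` in their relative order in
`τ`, then those of `B₂`, etc.; equivalently, `τ'` is characterized by the map
`j ↦ (f(τ'(j)), τ⁻¹(τ'(j)))` being strictly increasing lexicographically. -/
noncomputable def shuffleNu (n a : ℕ) (τ τ' : Equiv.Perm (Fin n)) : ℕ :=
  Nat.card {f : Fin n → Fin a //
    StrictMono fun j : Fin n => toLex (f (τ' j), τ.symm (τ' j))}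

/-- The transition matrix of the inverse `a`-shuffle chain on `S_n`. -/
noncomputable def shuffleK (n a : ℕ) :
    Matrix (Equiv.Perm (Fin n)) (Equiv.Perm (Fin n)) ℝ := fun τ τ' =>
  (shuffleNu n a τ τ' : ℝ) / (a : ℝ) ^ n

namespace Stmt12Aux
open Equiv

variable {n : ℕ}

lemma eval_charpoly_eq_det {ι : Type*} [Fintype ι] [DecidableEq ι]
    (N : Matrix ι ι ℂ) (x : ℂ) :
    N.charpoly.eval x = (x • (1 : Matrix ι ι ℂ) - N).det := by
  rw [Matrix.charpoly, ← coe_evalRingHom, RingHom.map_det]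
  congr 1
  ext i j
  by_cases h : i = j
  · subst h
    simp [Matrix.charmatrix_apply_eq, Matrix.one_apply]
  · simp [Matrix.charmatrix_apply_ne _ _ _ h, Matrix.one_apply, h]

lemma card_nthRoots_one (m : ℕ) (hm : m ≠ 0) :
    Multiset.card (nthRoots m (1 : ℂ)) = m := by
  have h1 : (X ^ m - C (1:ℂ)).Splits := IsAlgClosed.splits _
  have := splits_iff_card_roots.mp h1
  rwa [natDegree_X_pow_sub_C] at this

lemma prod_sub_mul (y w : ℂ) (hw : w ≠ 0) (s : Multiset ℂ) :
    (s.map fun r => y - w * r).prod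
      = w ^ Multiset.card s * (s.map fun r => y / w - r).prod := by
  have h : (fun r : ℂ => y - w * r) = fun r => w * (y / w - r) := by
    funext r; field_simp
  rw [h, Multiset.prod_map_mul, Multiset.map_const', Multiset.prod_replicate]

lemma prod_nthRoots_sub (m : ℕ) (hm : m ≠ 0) (y z : ℂ) :
    ((nthRoots m (1:ℂ)).map fun ζ => y - ζ * z).prod = y ^ m - z ^ m := by
  have hfact : (X ^ m - C (1:ℂ)) =
      ((nthRoots m (1:ℂ)).map fun a => X - C a).prod :=
    (IsAlgClosed.splits _).eq_prod_roots_of_monic (monic_X_pow_sub_C _ hm)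
  by_cases hz : z = 0
  · subst hz
    simp [card_nthRoots_one m hm, pow_ne_zero, hm]
  · have hcomm : ((nthRoots m (1:ℂ)).map fun ζ => y - ζ * z)
        = ((nthRoots m (1:ℂ)).map fun ζ => y - z * ζ) := by
      apply Multiset.map_congr rfl; intro ζ _; ring_nf
    rw [hcomm, prod_sub_mul y z hz, card_nthRoots_one m hm]
    have h2 : ((nthRoots m (1:ℂ)).map fun ζ => y / z - ζ).prod
        = (y/z) ^ m - 1 := by
      have := congrArg (eval (y/z)) hfact
      rw [eval_multiset_prod, Multiset.map_map] at this
      simp only [Function.comp, eval_sub, eval_X, eval_C, eval_pow, eval_one] at this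
      rw [← this]
    rw [h2, div_pow, mul_sub, mul_div_cancel₀ _ (pow_ne_zero _ hz), mul_one]

lemma charpoly_pow_roots {ι : Type*} [Fintype ι] [DecidableEq ι]
    (M : Matrix ι ι ℂ) (m : ℕ) (hm : m ≠ 0) :
    (M ^ m).charpoly.roots = M.charpoly.roots.map (· ^ m) := by
  set R := M.charpoly.roots with hR
  have hcardR : Multiset.card R = Fintype.card ι := by
    rw [hR, splits_iff_card_roots.mp (IsAlgClosed.splits _),
      Matrix.charpoly_natDegree_eq_dim]
  have hfact : M.charpoly = (R.map fun a => X - C a).prod :=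
    (IsAlgClosed.splits _).eq_prod_roots_of_monic (Matrix.charpoly_monic M)
  have key : (M ^ m).charpoly = ((R.map (· ^ m)).map fun a => X - C a).prod := by
    apply Polynomial.funext
    intro x
    obtain ⟨y, hy⟩ : ∃ y : ℂ, y ^ m = x := by
      obtain ⟨y, hy⟩ := Complex.exists_root (f := X ^ m - C x)
        (by rw [degree_X_pow_sub_C (Nat.pos_of_ne_zero hm)]; exact_mod_cast Nat.pos_of_ne_zero hm)
      exact ⟨y, by simpa [IsRoot, sub_eq_zero] using hy⟩
    have poly_id : ((nthRoots m (1:ℂ)).map fun ζ => C y - C ζ * X).prod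
        = C (y ^ m) - X ^ m := by
      apply Polynomial.funext
      intro z
      rw [eval_multiset_prod, Multiset.map_map]
      simpa using prod_nthRoots_sub m hm y z
    have det_factor : ∀ ζ ∈ nthRoots m (1:ℂ),
        (y • (1 : Matrix ι ι ℂ) - ζ • M).det = (R.map fun r => y - ζ * r).prod := by
      intro ζ hζ
      have hζm : ζ ^ m = 1 := (mem_nthRoots (Nat.pos_of_ne_zero hm)).mp hζ
      have hζ0 : ζ ≠ 0 := by rintro rfl; simp [zero_pow hm] at hζm
      have hmat : y • (1 : Matrix ι ι ℂ) - ζ • M = ζ • ((y/ζ) • 1 - M) := by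
        rw [smul_sub, smul_smul, mul_div_cancel₀ _ hζ0]
      rw [hmat, Matrix.det_smul, ← eval_charpoly_eq_det, hfact, eval_multiset_prod,
        Multiset.map_map, prod_sub_mul y ζ hζ0 R, hcardR]
      exact congrArg _ (congrArg Multiset.prod (Multiset.map_congr rfl
        (fun r _ => by simp [Function.comp, eval_sub, eval_X, eval_C])))
    have aeval_id : x • (1 : Matrix ι ι ℂ) - M ^ m
        = (((nthRoots m (1:ℂ)).map fun ζ => C y - C ζ * X).toList.map
            (fun p => aeval M p)).prod := by
      rw [← map_list_prod (aeval M : ℂ[X] →ₐ[ℂ] Matrix ι ι ℂ), Multiset.prod_toList, poly_id]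
      simp [Algebra.algebraMap_eq_smul_one, hy]
    have det_eq : (x • (1 : Matrix ι ι ℂ) - M ^ m).det
        = ((nthRoots m (1:ℂ)).map fun ζ => (R.map fun r => y - ζ * r).prod).prod := by
      rw [aeval_id]
      have h1 := map_list_prod (Matrix.detMonoidHom : Matrix ι ι ℂ →* ℂ)
        (((nthRoots m (1:ℂ)).map fun ζ => C y - C ζ * X).toList.map (fun p => aeval M p))
      rw [Matrix.coe_detMonoidHom] at h1
      rw [h1, List.map_map]
      have h2 : ∀ s : Multiset ℂ[X], ((s.toList.map
          (Matrix.det ∘ fun p => (aeval M) p)).prod : ℂ)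
          = (s.map fun p => ((aeval M) p).det).prod := by
        intro s
        rw [← Multiset.prod_coe, ← Multiset.map_coe, Multiset.coe_toList]
        rfl
      rw [h2, Multiset.map_map]
      apply congrArg
      apply Multiset.map_congr rfl
      intro ζ hζ
      have : ((aeval M) (C y - C ζ * X)).det = (y • (1 : Matrix ι ι ℂ) - ζ • M).det := by
        congr 1
        simp only [map_sub, map_mul, aeval_C, aeval_X, Algebra.algebraMap_eq_smul_one]
        rw [smul_mul_assoc, one_mul]
      rw [Function.comp_apply, this, det_factor ζ hζ]
    have hc : (M ^ m).charpoly.eval x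
        = (((R.map (· ^ m)).map fun a => X - C a).prod).eval x :=
      calc (M ^ m).charpoly.eval x = (x • (1 : Matrix ι ι ℂ) - M ^ m).det :=
        eval_charpoly_eq_det _ x
      _ = ((nthRoots m (1:ℂ)).map fun ζ => (R.map fun r => y - ζ * r).prod).prod := det_eq
      _ = (R.map fun r => ((nthRoots m (1:ℂ)).map fun ζ => y - ζ * r).prod).prod :=
        Multiset.prod_map_prod_map _ _
      _ = (R.map fun r => y ^ m - r ^ m).prod := by
        apply congrArg; apply Multiset.map_congr rfl; intro r _
        exact prod_nthRoots_sub m hm y r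
      _ = (((R.map (· ^ m)).map fun a => X - C a).prod).eval x := by
        have hmm2 : (R.map fun r => y ^ m - r ^ m)
            = ((R.map (· ^ m)).map fun a => X - C a).map (eval x) := by
          rw [Multiset.map_map, Multiset.map_map]
          apply Multiset.map_congr rfl
          intro r _
          simp [Function.comp, hy]
        rw [eval_multiset_prod, ← hmm2]
    exact hc
  rw [key, roots_multiset_prod_X_sub_C]

lemma trace_pow_eq_sum_pow_roots {ι : Type*} [Fintype ι] [DecidableEq ι]
    (M : Matrix ι ι ℂ) (m : ℕ) (hm : m ≠ 0) :
    (M ^ m).trace = (M.charpoly.roots.map (· ^ m)).sum := by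
  rw [Matrix.trace_eq_sum_roots_charpoly, charpoly_pow_roots M m hm]


def scond (k : ℕ) (τ τ' : Equiv.Perm (Fin n)) (f : Fin n → Fin k) : Prop :=
  StrictMono fun j : Fin n => toLex (f (τ' j), τ.symm (τ' j))

lemma shuffleNu_eq (k : ℕ) (τ τ' : Equiv.Perm (Fin n)) :
    shuffleNu n k τ τ' = Nat.card {f : Fin n → Fin k // scond k τ τ' f} := rfl

lemma phi_inj (k : ℕ) (τ : Equiv.Perm (Fin n)) (f : Fin n → Fin k) :
    Function.Injective (fun x : Fin n => toLex (f x, τ.symm x)) := by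
  intro x y h
  have h2 : τ.symm x = τ.symm y := congrArg (fun p => (ofLex p).2) h
  exact τ.symm.injective h2

lemma strictMono_perm_iff {α : Type*} [LinearOrder α] (φ : Fin n → α)
    (ρ : Equiv.Perm (Fin n)) (h : StrictMono fun j => φ (ρ j)) :
    ∀ x y, (φ x < φ y ↔ ρ.symm x < ρ.symm y) := by
  intro x y
  conv_lhs => rw [← ρ.apply_symm_apply x, ← ρ.apply_symm_apply y]
  exact h.lt_iff_lt (a := ρ.symm x) (b := ρ.symm y)

lemma sort_unique {α : Type*} [LinearOrder α] {φ : Fin n → α}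
    (hφ : Function.Injective φ) {ρ₁ ρ₂ : Equiv.Perm (Fin n)}
    (h1 : StrictMono fun j => φ (ρ₁ j)) (h2 : StrictMono fun j => φ (ρ₂ j)) :
    ρ₁ = ρ₂ := by
  have h3 : φ ∘ ρ₁ = φ ∘ ρ₂ :=
    Tuple.unique_monotone (f := φ) (σ := ρ₁) (τ := ρ₂) h1.monotone h2.monotone
  apply Equiv.ext
  intro x
  exact hφ (congrFun h3 x)

lemma sort_strictMono {α : Type*} [LinearOrder α] {φ : Fin n → α}
    (hφ : Function.Injective φ) :
    StrictMono fun j => φ (Tuple.sort φ j) :=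
  (Tuple.monotone_sort φ).strictMono_of_injective (hφ.comp (Tuple.sort φ).injective)

def fcomb {a b : ℕ} (g : Fin b) (f : Fin a) : Fin (a * b) :=
  ⟨f.1 + g.1 * a, by
    have h1 : f.1 + g.1 * a < (g.1 + 1) * a := by
      have := f.2; nlinarith [f.2]
    have h2 : (g.1 + 1) * a ≤ b * a := Nat.mul_le_mul_right a g.2
    calc f.1 + g.1 * a < (g.1 + 1) * a := h1
      _ ≤ b * a := h2
      _ = a * b := Nat.mul_comm b a⟩

lemma fcomb_lt_fcomb_iff {a b : ℕ} {g g' : Fin b} {f f' : Fin a} :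
    fcomb g f < fcomb g' f' ↔ g < g' ∨ (g = g' ∧ f < f') := by
  rw [Fin.lt_def]
  show f.1 + g.1 * a < f'.1 + g'.1 * a ↔ _
  constructor
  · intro h
    rcases lt_trichotomy g.1 g'.1 with h1 | h1 | h1
    · exact Or.inl h1
    · refine Or.inr ⟨Fin.ext h1, ?_⟩
      rw [h1] at h
      rw [Fin.lt_def]
      omega
    · exfalso
      have h2 : g'.1 + 1 ≤ g.1 := h1
      have hb := f'.2
      nlinarith
  · rintro (h | ⟨h, h2⟩)
    · have h2 : g.1 + 1 ≤ g'.1 := h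
      have hb := f.2
      nlinarith
    · rw [h]
      exact Nat.add_lt_add_right h2 _

lemma fcomb_inj {a b : ℕ} {g g' : Fin b} {f f' : Fin a}
    (h : fcomb g f = fcomb g' f') : g = g' ∧ f = f' := by
  have hv : f.1 + g.1 * a = f'.1 + g'.1 * a := congrArg Fin.val h
  have ha : 0 < a := f.pos
  have h1 : g.1 = g'.1 := by
    have e1 : (f.1 + g.1 * a) / a = g.1 := by
      rw [Nat.add_mul_div_right _ _ ha, Nat.div_eq_of_lt f.2, Nat.zero_add]
    have e2 : (f'.1 + g'.1 * a) / a = g'.1 := by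
      rw [Nat.add_mul_div_right _ _ ha, Nat.div_eq_of_lt f'.2, Nat.zero_add]
    rw [← e1, ← e2, hv]
  refine ⟨Fin.ext h1, Fin.ext ?_⟩
  rw [h1] at hv
  omega

def fpart {a b : ℕ} (ha : 0 < a) (h : Fin (a * b)) : Fin a := ⟨h.1 % a, Nat.mod_lt _ ha⟩

def gpart {a b : ℕ} (ha : 0 < a) (h : Fin (a * b)) : Fin b :=
  ⟨h.1 / a, by
    rw [Nat.div_lt_iff_lt_mul ha]
    calc h.1 < a * b := h.2
      _ = b * a := Nat.mul_comm a b⟩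

lemma fcomb_part {a b : ℕ} (ha : 0 < a) (h : Fin (a * b)) :
    fcomb (gpart ha h) (fpart ha h) = h := by
  apply Fin.ext
  show h.1 % a + h.1 / a * a = h.1
  exact Nat.mod_add_div' _ _

def convMap (a b : ℕ) (τ τ'' : Equiv.Perm (Fin n)) :
    (Σ τ' : Equiv.Perm (Fin n),
      {f : Fin n → Fin a // scond a τ τ' f} × {g : Fin n → Fin b // scond b τ' τ'' g}) →
    {h : Fin n → Fin (a * b) // scond (a * b) τ τ'' h} :=
  fun p =>
    ⟨fun x => fcomb (p.2.2.1 x) (p.2.1.1 x), by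
      obtain ⟨τ', ⟨f, hf⟩, ⟨g, hg⟩⟩ := p
      intro j j' hjj'
      dsimp only
      rw [Prod.Lex.lt_iff]
      have hgg := hg hjj'
      rw [Prod.Lex.lt_iff] at hgg
      rcases hgg with h1 | ⟨h1, h2⟩
      · exact Or.inl (fcomb_lt_fcomb_iff.mpr (Or.inl h1))
      · have hphi : toLex (f (τ'' j), τ.symm (τ'' j)) < toLex (f (τ'' j'), τ.symm (τ'' j')) :=
          (strictMono_perm_iff (fun x => toLex (f x, τ.symm x)) τ' hf (τ'' j) (τ'' j')).mpr h2
        rw [Prod.Lex.lt_iff] at hphi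
        rcases hphi with h3 | ⟨h3, h4⟩
        · exact Or.inl (fcomb_lt_fcomb_iff.mpr (Or.inr ⟨h1, h3⟩))
        · exact Or.inr ⟨by rw [show (f (τ'' j) : Fin a) = f (τ'' j') from h3,
            show (g (τ'' j) : Fin b) = g (τ'' j') from h1]; rfl, h4⟩⟩

lemma convMap_bijective (a b : ℕ) (ha : 0 < a) (τ τ'' : Equiv.Perm (Fin n)) :
    Function.Bijective (convMap a b τ τ'') := by
  constructor
  · rintro ⟨τ₁, ⟨f₁, hf₁⟩, ⟨g₁, hg₁⟩⟩ ⟨τ₂, ⟨f₂, hf₂⟩, ⟨g₂, hg₂⟩⟩ heq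
    have hval : ∀ x, fcomb (g₁ x) (f₁ x) = fcomb (g₂ x) (f₂ x) :=
      fun x => congrFun (congrArg Subtype.val heq) x
    have hfe : f₁ = f₂ := funext fun x => (fcomb_inj (hval x)).2
    have hge : g₁ = g₂ := funext fun x => (fcomb_inj (hval x)).1
    subst hfe; subst hge
    have hte : τ₁ = τ₂ := sort_unique (phi_inj a τ f₁) hf₁ hf₂
    subst hte
    rfl
  · rintro ⟨h, hh⟩
    set f : Fin n → Fin a := fun x => fpart ha (h x) with hfdef
    set g : Fin n → Fin b := fun x => gpart ha (h x) with hgdef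
    have hcomb : ∀ x, fcomb (g x) (f x) = h x := fun x => fcomb_part ha (h x)
    set φ : Fin n → Lex (Fin a × Fin n) := fun x => toLex (f x, τ.symm x) with hφdef
    have hφinj : Function.Injective φ := phi_inj a τ f
    set τ' := Tuple.sort φ with hτ'def
    have hf : scond a τ τ' f := sort_strictMono hφinj
    have hiso : ∀ x y, (φ x < φ y ↔ τ'.symm x < τ'.symm y) := strictMono_perm_iff φ τ' hf
    have hg : scond b τ' τ'' g := by
      intro j j' hjj'
      dsimp only
      rw [Prod.Lex.lt_iff]
      have hhh := hh hjj'
      rw [Prod.Lex.lt_iff] at hhh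
      rcases hhh with h1 | ⟨h1, h2⟩
      · dsimp only at h1; rw [← hcomb (τ'' j), ← hcomb (τ'' j')] at h1
        rcases fcomb_lt_fcomb_iff.mp h1 with h3 | ⟨h3, h4⟩
        · exact Or.inl h3
        · refine Or.inr ⟨h3, ?_⟩
          apply (hiso (τ'' j) (τ'' j')).mp
          rw [hφdef]
          dsimp only
          rw [Prod.Lex.lt_iff]
          exact Or.inl h4
      · have h1' : h (τ'' j) = h (τ'' j') := h1
        have h3 : f (τ'' j) = f (τ'' j') := congrArg (fpart ha) h1'
        have h4 : g (τ'' j) = g (τ'' j') := congrArg (gpart ha) h1'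
        refine Or.inr ⟨h4, ?_⟩
        apply (hiso (τ'' j) (τ'' j')).mp
        rw [hφdef]
        dsimp only
        rw [Prod.Lex.lt_iff]
        exact Or.inr ⟨h3, h2⟩
    exact ⟨⟨τ', ⟨f, hf⟩, ⟨g, hg⟩⟩, Subtype.ext (funext hcomb)⟩

lemma sum_nu_mul_nu (a b : ℕ) (ha : 0 < a) (τ τ'' : Equiv.Perm (Fin n)) :
    ∑ τ' : Equiv.Perm (Fin n), shuffleNu n a τ τ' * shuffleNu n b τ' τ'' =
      shuffleNu n (a * b) τ τ'' := by
  classical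
  have hbij := convMap_bijective a b ha τ τ''
  have hcard := Nat.card_eq_of_bijective _ hbij
  rw [shuffleNu_eq, ← hcard, Nat.card_eq_fintype_card, Fintype.card_sigma]
  apply Finset.sum_congr rfl
  intro τ' _
  rw [shuffleNu_eq, shuffleNu_eq, ← Nat.card_prod, Nat.card_eq_fintype_card]

lemma shuffleK_mul (a b : ℕ) (ha : 0 < a) :
    shuffleK n a * shuffleK n b = shuffleK n (a * b) := by
  ext τ τ''
  simp only [Matrix.mul_apply, shuffleK]
  rw [← sum_nu_mul_nu a b ha τ τ'']
  push_cast
  rw [Finset.sum_div]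
  apply Finset.sum_congr rfl
  intro τ' _
  rw [mul_pow]
  field_simp

lemma shuffleK_pow (a : ℕ) (ha : 0 < a) (m : ℕ) (hm : m ≠ 0) :
    (shuffleK n a) ^ m = shuffleK n (a ^ m) := by
  induction m with
  | zero => omega
  | succ m ih =>
    rcases Nat.eq_zero_or_pos m with hm0 | hm0
    · subst hm0; simp [pow_one]
    · rw [pow_succ, ih (by omega), shuffleK_mul (a ^ m) a (by positivity), ← pow_succ]

/-- number of cycles (counting fixed points) -/
def cyc (σ : Equiv.Perm (Fin n)) : ℕ := (n - σ.cycleType.sum) + σ.cycleType.card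

lemma inv_zpow {b : ℕ} {σ : Equiv.Perm (Fin n)} {φ : Fin n → Fin b}
    (hφ : φ ∘ σ = φ) : ∀ (k : ℤ) (x : Fin n), φ ((σ ^ k) x) = φ x := by
  have hnat : ∀ (m : ℕ) (x : Fin n), φ ((σ ^ m) x) = φ x := by
    intro m
    induction m with
    | zero => intro x; simp
    | succ m ih =>
      intro x
      have : (σ ^ (m + 1)) x = (σ ^ m) (σ x) := by
        rw [pow_succ]
        rfl
      rw [this, ih (σ x)]
      exact congrFun hφ x
  intro k x
  cases k with
  | ofNat m => simpa using hnat m x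
  | negSucc m =>
    have h1 : σ ^ (Int.negSucc m) = (σ ^ (m + 1))⁻¹ := by
      rw [zpow_negSucc]
    rw [h1]
    have := hnat (m + 1) ((σ ^ (m + 1))⁻¹ x)
    rw [Equiv.Perm.inv_def, Equiv.apply_symm_apply] at this
    exact this.symm

lemma eq_on_cycle {b : ℕ} {σ : Equiv.Perm (Fin n)} {φ : Fin n → Fin b}
    (hφ : φ ∘ σ = φ) {x y : Fin n} (h : σ.SameCycle x y) : φ x = φ y := by
  obtain ⟨k, hk⟩ := h
  rw [← hk]
  exact (inv_zpow hφ k x).symm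

lemma card_fixed (b : ℕ) (σ : Equiv.Perm (Fin n)) :
    Nat.card {φ : Fin n → Fin b // φ ∘ σ = φ} = b ^ cyc σ := by
  classical
  have hsupp : ∀ c : {c // c ∈ σ.cycleFactorsFinset}, c.1.support.Nonempty := by
    intro c
    rw [Finset.nonempty_iff_ne_empty, Ne, Equiv.Perm.support_eq_empty_iff]
    exact (Equiv.Perm.mem_cycleFactorsFinset_iff.mp c.2).1.ne_one
  set pt : {c // c ∈ σ.cycleFactorsFinset} → Fin n := fun c => c.1.support.min' (hsupp c)
    with hptdef
  have hptmem : ∀ c, pt c ∈ c.1.support := fun c => c.1.support.min'_mem (hsupp c)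
  have hptmoved : ∀ c, σ (pt c) ≠ pt c := by
    intro c
    obtain ⟨hcyc, hagree⟩ := Equiv.Perm.mem_cycleFactorsFinset_iff.mp c.2
    have h1 : c.1 (pt c) ≠ pt c := Equiv.Perm.mem_support.mp (hptmem c)
    rw [← hagree (pt c) (hptmem c)]
    exact h1
  have hptcyc : ∀ c, σ.cycleOf (pt c) = c.1 :=
    fun c => (Equiv.Perm.cycle_is_cycleOf (hptmem c) c.2).symm
  let e : {φ : Fin n → Fin b // φ ∘ σ = φ} ≃
      (({x : Fin n // σ x = x} → Fin b) × ({c // c ∈ σ.cycleFactorsFinset} → Fin b)) :=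
    { toFun := fun φ => (fun x => φ.1 x.1, fun c => φ.1 (pt c))
      invFun := fun uv =>
        ⟨fun x => if hx : σ x = x then uv.1 ⟨x, hx⟩ else
            uv.2 ⟨σ.cycleOf x, Equiv.Perm.cycleOf_mem_cycleFactorsFinset_iff.mpr
              (Equiv.Perm.mem_support.mpr hx)⟩, by
          funext x
          by_cases hx : σ x = x
          · have hσx : σ (σ x) = σ x := congrArg σ hx
            simp only [Function.comp_apply, dif_pos hx, dif_pos hσx]
            exact congrArg uv.1 (Subtype.ext hx)
          · have hσx : ¬ σ (σ x) = σ x := fun hcon => hx (σ.injective hcon)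
            simp only [Function.comp_apply, dif_neg hx, dif_neg hσx]
            exact congrArg uv.2 (Subtype.ext (Equiv.Perm.cycleOf_self_apply σ x))⟩
      left_inv := by
        rintro ⟨φ, hφ⟩
        apply Subtype.ext
        funext x
        by_cases hx : σ x = x
        · simp only [dif_pos hx]
        · simp only [dif_neg hx]
          have hmem : x ∈ σ.support := Equiv.Perm.mem_support.mpr hx
          set c : {c // c ∈ σ.cycleFactorsFinset} :=
            ⟨σ.cycleOf x, Equiv.Perm.cycleOf_mem_cycleFactorsFinset_iff.mpr hmem⟩
          have hsc : σ.SameCycle x (pt c) := by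
            have := hptmem c
            rw [Equiv.Perm.mem_support_cycleOf_iff] at this
            exact this.1
          exact (eq_on_cycle hφ hsc).symm
      right_inv := by
        rintro ⟨u, v⟩
        apply Prod.ext
        · funext x
          simp only [dif_pos x.2]
        · funext c
          have hne : ¬ σ (pt c) = pt c := hptmoved c
          simp only [dif_neg hne]
          exact congrArg v (Subtype.ext (hptcyc c)) }
  rw [Nat.card_congr e, Nat.card_prod, Nat.card_fun, Nat.card_fun]
  have h1 : Nat.card {x : Fin n // σ x = x} = n - σ.cycleType.sum := by
    have e2 : {x : Fin n // σ x = x} ≃ {x : Fin n // ¬ x ∈ σ.support} :=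
      Equiv.subtypeEquivRight (fun x => by simp [Equiv.Perm.mem_support, not_not])
    rw [Nat.card_congr e2, Nat.card_eq_fintype_card, Fintype.card_subtype_compl,
      Equiv.Perm.sum_cycleType, Fintype.card_fin]
    congr 1
    exact Fintype.card_coe _
  have h2 : Nat.card {c // c ∈ σ.cycleFactorsFinset} = σ.cycleType.card := by
    rw [Nat.card_eq_fintype_card, Fintype.card_coe, Equiv.Perm.cycleType_def,
      Multiset.card_map]
    rfl
  rw [h1, h2, Nat.card_eq_fintype_card, Fintype.card_fin, cyc, pow_add]

lemma cyc_le (σ : Equiv.Perm (Fin n)) : cyc σ ≤ n := by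
  have h1 : σ.cycleType.card ≤ σ.cycleType.sum := by
    have := Multiset.card_nsmul_le_sum (s := σ.cycleType) (a := 1)
      (fun x hx => Equiv.Perm.one_lt_of_mem_cycleType hx |>.le)
    simpa using this
  have h2 : σ.cycleType.sum ≤ n := by
    rw [Equiv.Perm.sum_cycleType]
    calc σ.support.card ≤ Fintype.card (Fin n) := Finset.card_le_univ _
      _ = n := Fintype.card_fin n
  unfold cyc
  omega

lemma cyc_pos (hn : 1 ≤ n) (σ : Equiv.Perm (Fin n)) : 1 ≤ cyc σ := by
  rcases Nat.eq_zero_or_pos σ.cycleType.card with h | h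
  · have hσ : σ = 1 := Equiv.Perm.card_cycleType_eq_zero.mp h
    subst hσ
    unfold cyc
    simp [Equiv.Perm.cycleType_one]
    omega
  · unfold cyc
    omega

noncomputable def orbitsEquivMonotone (b : ℕ) :
    Quotient (MulAction.orbitRel (Equiv.Perm (Fin n))ᵈᵐᵃ (Fin n → Fin b)) ≃
      {ψ : Fin n → Fin b // Monotone ψ} where
  toFun := Quotient.lift
    (fun φ => (⟨φ ∘ ⇑(Tuple.sort φ), Tuple.monotone_sort φ⟩ : {ψ : Fin n → Fin b // Monotone ψ}))
    (by
      intro φ ψ hrel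
      have hmem : φ ∈ MulAction.orbit (Equiv.Perm (Fin n))ᵈᵐᵃ ψ :=
        (MulAction.orbitRel_apply).mp hrel
      obtain ⟨g, hg⟩ := MulAction.mem_orbit_iff.mp hmem
      obtain ⟨σ, rfl⟩ := DomMulAct.mk.surjective g
      have hφ : φ = ψ ∘ ⇑σ := hg.symm
      apply Subtype.ext
      dsimp only
      rw [hφ]
      exact Tuple.comp_perm_comp_sort_eq_comp_sort)
  invFun := fun ψ => Quotient.mk _ ψ.1
  left_inv := by
    intro q
    induction q using Quotient.inductionOn with
    | h φ =>
      apply Quotient.sound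
      exact MulAction.mem_orbit_iff.mpr ⟨DomMulAct.mk (Tuple.sort φ), rfl⟩
  right_inv := by
    rintro ⟨ψ, hψ⟩
    apply Subtype.ext
    dsimp only
    have h1 : Monotone (ψ ∘ ⇑(1 : Equiv.Perm (Fin n))) := by
      simpa using hψ
    have := Tuple.unique_monotone (f := ψ) (σ := Tuple.sort ψ) (τ := 1)
      (Tuple.monotone_sort ψ) h1
    simpa using this

lemma sum_pow_cyc (b : ℕ) :
    ∑ σ : Equiv.Perm (Fin n), b ^ cyc σ =
      Nat.card {ψ : Fin n → Fin b // Monotone ψ} * Fintype.card (Equiv.Perm (Fin n)) := by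
  classical
  letI : Fintype ((Equiv.Perm (Fin n))ᵈᵐᵃ) := Fintype.ofEquiv _ DomMulAct.mk
  have hb := MulAction.sum_card_fixedBy_eq_card_orbits_mul_card_group
    ((Equiv.Perm (Fin n))ᵈᵐᵃ) (Fin n → Fin b)
  have key : ∀ σ : Equiv.Perm (Fin n),
      Fintype.card (MulAction.fixedBy (Fin n → Fin b) (DomMulAct.mk σ)) = b ^ cyc σ := by
    intro σ
    rw [← Nat.card_eq_fintype_card, ← card_fixed b σ]
    apply Nat.card_congr
    exact Equiv.subtypeEquivRight (fun φ => Iff.rfl)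
  have hsum : ∑ a : (Equiv.Perm (Fin n))ᵈᵐᵃ,
      Fintype.card (MulAction.fixedBy (Fin n → Fin b) a) =
      ∑ σ : Equiv.Perm (Fin n), b ^ cyc σ := by
    calc ∑ a : (Equiv.Perm (Fin n))ᵈᵐᵃ, Fintype.card (MulAction.fixedBy (Fin n → Fin b) a)
        = ∑ σ : Equiv.Perm (Fin n),
            Fintype.card (MulAction.fixedBy (Fin n → Fin b) (DomMulAct.mk σ)) :=
          (Equiv.sum_comp DomMulAct.mk
            (fun a => Fintype.card (MulAction.fixedBy (Fin n → Fin b) a))).symm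
      _ = ∑ σ : Equiv.Perm (Fin n), b ^ cyc σ := Finset.sum_congr rfl (fun σ _ => key σ)
  rw [← hsum, hb]
  congr 1
  · rw [← Nat.card_eq_fintype_card, Nat.card_congr (orbitsEquivMonotone b)]
  · exact Fintype.card_congr DomMulAct.mk.symm

lemma scond_self_iff (b : ℕ) (τ : Equiv.Perm (Fin n)) (f : Fin n → Fin b) :
    scond b τ τ f ↔ Monotone (f ∘ ⇑τ) := by
  constructor
  · intro h j j' hle
    rcases eq_or_lt_of_le hle with h1 | h1
    · exact le_of_eq (congrArg (f ∘ ⇑τ) h1)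
    · have h2 := h h1
      rw [Prod.Lex.lt_iff] at h2
      rcases h2 with h3 | ⟨h3, _⟩
      · exact le_of_lt h3
      · exact le_of_eq h3
  · intro h j j' hlt
    have hle := h (le_of_lt hlt)
    rw [Prod.Lex.lt_iff]
    rcases lt_or_eq_of_le hle with h1 | h1
    · exact Or.inl h1
    · refine Or.inr ⟨h1, ?_⟩
      show τ.symm (τ j) < τ.symm (τ j')
      simpa using hlt

lemma nu_diag (b : ℕ) (τ : Equiv.Perm (Fin n)) :
    shuffleNu n b τ τ = Nat.card {ψ : Fin n → Fin b // Monotone ψ} := by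
  rw [shuffleNu_eq]
  apply Nat.card_congr
  refine Equiv.subtypeEquiv (Equiv.arrowCongr τ.symm (Equiv.refl (Fin b))) ?_
  intro f
  rw [scond_self_iff]
  have he : ((Equiv.arrowCongr τ.symm (Equiv.refl (Fin b))) f : Fin n → Fin b) = f ∘ ⇑τ := rfl
  rw [he]

lemma trace_shuffleK (b : ℕ) :
    (shuffleK n b).trace = (∑ σ : Equiv.Perm (Fin n), (b : ℝ) ^ cyc σ) / (b : ℝ) ^ n := by
  have h1 : (shuffleK n b).trace = ∑ τ : Equiv.Perm (Fin n), shuffleK n b τ τ := by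
    simp [Matrix.trace, Matrix.diag]
  rw [h1]
  have h2 : ∀ τ : Equiv.Perm (Fin n), shuffleK n b τ τ =
      (Nat.card {ψ : Fin n → Fin b // Monotone ψ} : ℝ) / (b : ℝ) ^ n := by
    intro τ
    rw [shuffleK, nu_diag]
  rw [Finset.sum_congr rfl (fun τ _ => h2 τ), Finset.sum_const, Finset.card_univ]
  have h3 : (∑ σ : Equiv.Perm (Fin n), (b : ℝ) ^ cyc σ) =
      ((∑ σ : Equiv.Perm (Fin n), b ^ cyc σ : ℕ) : ℝ) := by push_cast; rfl
  rw [h3, sum_pow_cyc]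
  push_cast
  rw [nsmul_eq_mul]
  ring

lemma group_sum (hn : 1 ≤ n) (F : ℕ → ℝ) :
    ∑ σ : Equiv.Perm (Fin n), F (n - cyc σ) =
      ∑ i ∈ Finset.range n,
        (Nat.card {σ : Equiv.Perm (Fin n) // cyc σ = n - i} : ℝ) * F i := by
  classical
  have hmaps : ∀ σ ∈ (Finset.univ : Finset (Equiv.Perm (Fin n))),
      n - cyc σ ∈ Finset.range n := by
    intro σ _
    rw [Finset.mem_range]
    have := cyc_pos hn σ
    omega
  rw [← Finset.sum_fiberwise_of_maps_to hmaps (fun σ => F (n - cyc σ))]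
  apply Finset.sum_congr rfl
  intro i hi
  rw [Finset.mem_range] at hi
  have hcongr : ∀ σ ∈ Finset.filter (fun σ => n - cyc σ = i)
      (Finset.univ : Finset (Equiv.Perm (Fin n))), F (n - cyc σ) = F i := by
    intro σ hσ
    rw [Finset.mem_filter] at hσ
    rw [hσ.2]
  rw [Finset.sum_congr rfl hcongr, Finset.sum_const, nsmul_eq_mul]
  congr 2
  have hiff : ∀ σ : Equiv.Perm (Fin n), (cyc σ = n - i) ↔ (n - cyc σ = i) := by
    intro σ
    have h1 := cyc_le σ
    have h2 := cyc_pos hn σ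
    omega
  rw [Nat.card_congr (Equiv.subtypeEquivRight hiff), Nat.card_eq_fintype_card,
    Fintype.card_subtype]

lemma card_perm_eq_sum (hn : 1 ≤ n) :
    Fintype.card (Equiv.Perm (Fin n)) =
      ∑ i ∈ Finset.range n, Nat.card {σ : Equiv.Perm (Fin n) // cyc σ = n - i} := by
  classical
  have hmaps : ∀ σ ∈ (Finset.univ : Finset (Equiv.Perm (Fin n))),
      n - cyc σ ∈ Finset.range n := by
    intro σ _
    rw [Finset.mem_range]
    have := cyc_pos hn σ
    omega
  rw [← Finset.card_univ, Finset.card_eq_sum_card_fiberwise hmaps]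
  apply Finset.sum_congr rfl
  intro i hi
  rw [Finset.mem_range] at hi
  have hiff : ∀ σ : Equiv.Perm (Fin n), (cyc σ = n - i) ↔ (n - cyc σ = i) := by
    intro σ
    have h1 := cyc_le σ
    have h2 := cyc_pos hn σ
    omega
  rw [Nat.card_congr (Equiv.subtypeEquivRight hiff), Nat.card_eq_fintype_card,
    Fintype.card_subtype]


open Matrix in
lemma multiset_eq_of_powsums (R S : Multiset ℂ)
    (h : ∀ m : ℕ, (R.map (· ^ m)).sum = (S.map (· ^ m)).sum) : R = S := by
  classical
  set T : Finset ℂ := R.toFinset ∪ S.toFinset with hT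
  set k := T.card with hk
  have hexp : ∀ (M : Multiset ℂ), M.toFinset ⊆ T → ∀ m : ℕ,
      (M.map (· ^ m)).sum = ∑ t ∈ T, (M.count t : ℂ) * t ^ m := by
    intro M hsub m
    rw [Finset.sum_multiset_map_count]
    rw [← Finset.sum_subset hsub (by
      intro t _ htM
      rw [Multiset.count_eq_zero_of_notMem (fun hc => htM (Multiset.mem_toFinset.mpr hc))]
      simp)]
    apply Finset.sum_congr rfl
    intro t _
    rw [nsmul_eq_mul]
  have hzero : ∀ m : ℕ, ∑ t ∈ T, ((R.count t : ℂ) - S.count t) * t ^ m = 0 := by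
    intro m
    have h1 := hexp R Finset.subset_union_left m
    have h2 := hexp S Finset.subset_union_right m
    have h3 := h m
    rw [h1, h2] at h3
    calc ∑ t ∈ T, ((R.count t : ℂ) - S.count t) * t ^ m
        = ∑ t ∈ T, ((R.count t : ℂ) * t ^ m - (S.count t : ℂ) * t ^ m) := by
          apply Finset.sum_congr rfl; intro t _; ring
      _ = (∑ t ∈ T, (R.count t : ℂ) * t ^ m) - ∑ t ∈ T, (S.count t : ℂ) * t ^ m :=
          Finset.sum_sub_distrib _ _
      _ = 0 := by rw [h3, sub_self]
  set w : Fin k → ℂ := fun j => (T.equivFin.symm j : ℂ) with hw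
  have hwinj : Function.Injective w := by
    intro i j hij
    exact T.equivFin.symm.injective (Subtype.ext hij)
  set d : Fin k → ℂ := fun j => (R.count (w j) : ℂ) - S.count (w j) with hd
  have hmv : (Matrix.vandermonde w)ᵀ.mulVec d = 0 := by
    funext m
    show ∑ j, (Matrix.vandermonde w)ᵀ m j * d j = 0
    have hsum : ∑ j, (Matrix.vandermonde w)ᵀ m j * d j
        = ∑ t ∈ T, ((R.count t : ℂ) - S.count t) * t ^ (m : ℕ) := by
      rw [← Finset.sum_coe_sort T (fun t => ((R.count t : ℂ) - S.count t) * t ^ (m : ℕ))]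
      rw [← Equiv.sum_comp T.equivFin.symm
        (fun t => ((R.count (t : ℂ) : ℂ) - S.count (t : ℂ)) * (t : ℂ) ^ (m : ℕ))]
      apply Finset.sum_congr rfl
      intro j _
      rw [Matrix.transpose_apply, Matrix.vandermonde_apply]
      ring
    rw [hsum, hzero]
  have hdet : (Matrix.vandermonde w)ᵀ.det ≠ 0 := by
    rw [Matrix.det_transpose, Matrix.det_vandermonde]
    apply Finset.prod_ne_zero_iff.mpr
    intro i _
    apply Finset.prod_ne_zero_iff.mpr
    intro j hj
    rw [Finset.mem_Ioi] at hj
    exact sub_ne_zero.mpr (fun hc => (ne_of_gt hj) (hwinj hc))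
  have hd0 : d = 0 := by
    have hU : IsUnit (Matrix.vandermonde w)ᵀ.det := isUnit_iff_ne_zero.mpr hdet
    calc d = Matrix.mulVec 1 d := (Matrix.one_mulVec d).symm
      _ = ((Matrix.vandermonde w)ᵀ⁻¹ * (Matrix.vandermonde w)ᵀ).mulVec d := by
          rw [Matrix.nonsing_inv_mul _ hU]
      _ = (Matrix.vandermonde w)ᵀ⁻¹.mulVec ((Matrix.vandermonde w)ᵀ.mulVec d) :=
          (Matrix.mulVec_mulVec _ _ _).symm
      _ = 0 := by rw [hmv, Matrix.mulVec_zero]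
  have hcount : ∀ t : ℂ, R.count t = S.count t := by
    intro t
    by_cases ht : t ∈ T
    · have h1 : d (T.equivFin ⟨t, ht⟩) = 0 := congrFun hd0 _
      have h2 : w (T.equivFin ⟨t, ht⟩) = t := by
        simp [hw]
      have h4 : (R.count t : ℂ) - S.count t = 0 := by
        rw [← h2]
        exact h1
      have h3 : (R.count t : ℂ) = S.count t := sub_eq_zero.mp h4
      exact_mod_cast h3
    · have h1 : t ∉ R.toFinset := fun hc => ht (Finset.mem_union_left _ hc)
      have h2 : t ∉ S.toFinset := fun hc => ht (Finset.mem_union_right _ hc)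
      rw [Multiset.count_eq_zero_of_notMem (fun hc => h1 (Multiset.mem_toFinset.mpr hc)),
        Multiset.count_eq_zero_of_notMem (fun hc => h2 (Multiset.mem_toFinset.mpr hc))]
  exact Multiset.ext.mpr hcount


end Stmt12Aux

/-- The eigenvalues of the inverse `a`-shuffle transition matrix are
`1, 1/a, …, 1/a^{n-1}`, the multiplicity of `1/a^i` being the number of
permutations in `S_n` with exactly `n - i` cycles (counting fixed points as
cycles; the cycle count of `σ` is `(n - σ.cycleType.sum) + σ.cycleType.card`). -/
theorem stmt12 (n a : ℕ) (hn : 1 ≤ n) (ha : 2 ≤ a) :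
    (shuffleK n a).charpoly
      = ∏ i ∈ Finset.range n,
          (X - C ((1 : ℝ) / (a : ℝ) ^ i)) ^
            Nat.card {σ : Equiv.Perm (Fin n) //
              (n - σ.cycleType.sum) + σ.cycleType.card = n - i} := by
  classical
  open Stmt12Aux in
  have hgoal : ∀ i : ℕ, Nat.card {σ : Equiv.Perm (Fin n) //
      (n - σ.cycleType.sum) + σ.cycleType.card = n - i}
      = Nat.card {σ : Equiv.Perm (Fin n) // Stmt12Aux.cyc σ = n - i} := fun _ => rfl
  simp only [hgoal]
  set c : ℕ → ℕ := fun i => Nat.card {σ : Equiv.Perm (Fin n) // Stmt12Aux.cyc σ = n - i}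
    with hcdef
  set v : ℕ → ℝ := fun i => (1 : ℝ) / (a : ℝ) ^ i with hvdef
  set f := algebraMap ℝ ℂ with hfdef
  set K := shuffleK n a with hKdef
  set Kc := K.map f with hKcdef
  have hapos : 0 < a := by omega
  have hfinj : Function.Injective f := (algebraMap ℝ ℂ).injective
  have hinj : Function.Injective (Polynomial.map f : ℝ[X] → ℂ[X]) :=
    Polynomial.map_injective f hfinj
  apply hinj
  rw [← Matrix.charpoly_map]
  -- the target multiset of eigenvalues
  set S : Multiset ℂ :=
    Multiset.bind (Finset.range n).val (fun i => Multiset.replicate (c i) (f (v i))) with hSdef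
  have hRHS : Polynomial.map f (∏ i ∈ Finset.range n, (X - C (v i)) ^ c i)
      = (S.map (fun s => X - C s)).prod := by
    rw [Polynomial.map_prod, hSdef, Multiset.map_bind, Multiset.prod_bind]
    rw [Finset.prod_eq_multiset_prod]
    apply congrArg
    apply Multiset.map_congr rfl
    intro i _
    rw [Multiset.map_replicate, Multiset.prod_replicate, Polynomial.map_pow,
      Polynomial.map_sub, Polynomial.map_X, Polynomial.map_C]
  rw [hRHS]
  have hmonic : Kc.charpoly.Monic := Matrix.charpoly_monic Kc
  have hsplit : Kc.charpoly.Splits := IsAlgClosed.splits _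
  have hcardR : Multiset.card Kc.charpoly.roots = Fintype.card (Equiv.Perm (Fin n)) := by
    rw [splits_iff_card_roots.mp hsplit, Matrix.charpoly_natDegree_eq_dim]
  -- power sums of the target multiset
  have hSsum : ∀ m : ℕ, (S.map (· ^ m)).sum
      = ∑ i ∈ Finset.range n, (c i : ℂ) * (f (v i)) ^ m := by
    intro m
    rw [hSdef, Multiset.map_bind, Multiset.sum_bind, Finset.sum_eq_multiset_sum]
    apply congrArg
    apply Multiset.map_congr rfl
    intro i _
    rw [Multiset.map_replicate, Multiset.sum_replicate, nsmul_eq_mul]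
  -- the real trace computation
  have htrace : ∀ m : ℕ, m ≠ 0 →
      (K ^ m).trace = ∑ i ∈ Finset.range n, (c i : ℝ) * (v i) ^ m := by
    intro m hm
    rw [hKdef, shuffleK_pow a hapos m hm, trace_shuffleK]
    have hterm : ∀ σ : Equiv.Perm (Fin n),
        ((a ^ m : ℕ) : ℝ) ^ cyc σ / ((a ^ m : ℕ) : ℝ) ^ n
          = (fun d : ℕ => ((1 : ℝ) / (a : ℝ) ^ d) ^ m) (n - cyc σ) := by
      intro σ
      have h1 : cyc σ ≤ n := cyc_le σ
      have hb : ((a ^ m : ℕ) : ℝ) = ((a : ℝ) ^ m) := by push_cast; rfl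
      have hane : (a : ℝ) ≠ 0 := by positivity
      rw [hb]
      have hsplitpow : ((a : ℝ) ^ m) ^ n = ((a : ℝ) ^ m) ^ cyc σ * ((a : ℝ) ^ m) ^ (n - cyc σ) := by
        rw [← pow_add]
        congr 1
        omega
      rw [hsplitpow]
      have hne1 : ((a : ℝ) ^ m) ^ cyc σ ≠ 0 := by positivity
      have hne2 : ((a : ℝ) ^ m) ^ (n - cyc σ) ≠ 0 := by positivity
      field_simp
      rw [one_div, inv_pow, ← pow_mul (a:ℝ) (n - cyc σ) m, Nat.mul_comm (n - cyc σ) m,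
        ← pow_mul (a:ℝ) m (n - cyc σ), mul_inv_cancel₀ (pow_ne_zero _ hane)]
    rw [Finset.sum_div, Finset.sum_congr rfl (fun σ _ => hterm σ),
      group_sum hn (fun d : ℕ => ((1 : ℝ) / (a : ℝ) ^ d) ^ m)]
  -- matching power sums
  have hpows : ∀ m : ℕ, (Kc.charpoly.roots.map (· ^ m)).sum = (S.map (· ^ m)).sum := by
    intro m
    rcases Nat.eq_zero_or_pos m with hm | hm
    · subst hm
      have hcount : ∀ M : Multiset ℂ, (M.map (· ^ 0)).sum = (Multiset.card M : ℂ) := by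
        intro M
        rw [show ((· ^ 0) : ℂ → ℂ) = fun _ => (1 : ℂ) from funext (fun x => pow_zero x),
          Multiset.map_const', Multiset.sum_replicate, nsmul_eq_mul, mul_one]
      rw [hcount, hcount, hcardR]
      have hScard : Multiset.card S = Fintype.card (Equiv.Perm (Fin n)) := by
        rw [hSdef, Multiset.card_bind]
        rw [show Multiset.card ∘ (fun i => Multiset.replicate (c i) (f (v i))) = c from
          funext (fun i => Multiset.card_replicate _ _)]
        rw [← Finset.sum_eq_multiset_sum]
        exact (card_perm_eq_sum hn).symm
      rw [hScard]
    · have hm' : m ≠ 0 := by omega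
      have h1 : Kc ^ m = (K ^ m).map f := by
        have h2 := map_pow (RingHom.mapMatrix f
          (m := Equiv.Perm (Fin n))) K m
        rw [RingHom.mapMatrix_apply, RingHom.mapMatrix_apply] at h2
        rw [hKcdef, ← h2]
      have htm : ∀ M : Matrix (Equiv.Perm (Fin n)) (Equiv.Perm (Fin n)) ℝ,
          (M.map ⇑f).trace = f M.trace := by
        intro M
        simp [Matrix.trace, Matrix.diag, Matrix.map_apply, map_sum]
      rw [← trace_pow_eq_sum_pow_roots Kc m hm', h1, htm (K ^ m), htrace m hm', map_sum, hSsum]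
      apply Finset.sum_congr rfl
      intro i _
      rw [map_mul, map_pow, map_natCast]
  have hRS : Kc.charpoly.roots = S :=
    multiset_eq_of_powsums _ _ hpows
  rw [hsplit.eq_prod_roots_of_monic hmonic, hRS]
end

section
/- The uniform distribution on S_n is stationary for the inverse a-shuffle chain: if K(τ, τ') = ν(τ, τ')/a^n, where ν(τ, τ') is the number of weak ordered partitions of [n] into a blocks whose action on τ yields τ', then ∑_τ K(τ, τ') = 1·a^n/a^n, i.e., ∑_τ (1/n!) K(τ, τ') = 1/n! for every τ'. -/
/-- The strict-monotonicity condition pins down the permutation as `Tuple.sort`. -/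
lemma cond_iff_sort {n a : ℕ} (h : Fin n → Fin a) (σ : Equiv.Perm (Fin n)) :
    (StrictMono fun j : Fin n => toLex (h (σ j), σ j)) ↔ σ = Tuple.sort h := by
  rw [Tuple.eq_sort_iff']
  constructor
  · intro hs i j hij
    exact hs hij
  · intro hs i j hij
    exact hs hij

/-- The key bijection: pairs `(τ, f)` satisfying the inverse-shuffle condition
(relative to a fixed `τ'`) correspond bijectively to arbitrary functions
`Fin n → Fin a`, via `(τ, f) ↦ f ∘ τ`. -/
lemma shuffle_bij {n a : ℕ} (τ' : Equiv.Perm (Fin n)) :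
    Function.Bijective
      (fun p : (Σ τ : Equiv.Perm (Fin n), {f : Fin n → Fin a //
          StrictMono fun j : Fin n => toLex (f (τ' j), τ.symm (τ' j))}) =>
        (p.2.1 ∘ p.1 : Fin n → Fin a)) := by
  constructor
  · rintro ⟨τ, f, hf⟩ ⟨ρ, g, hg⟩ hfg
    simp only at hfg
    set h : Fin n → Fin a := f ∘ τ with hh
    have hgρ : g ∘ ρ = h := hfg.symm
    have hf' : (τ'.trans τ.symm) = Tuple.sort h := by
      rw [← cond_iff_sort]
      convert hf using 2 with j
      simp [hh, Equiv.trans_apply, Function.comp]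
    have hg' : (τ'.trans ρ.symm) = Tuple.sort h := by
      rw [← cond_iff_sort]
      convert hg using 2 with j
      have : g (τ' j) = h (ρ.symm (τ' j)) := by
        have := congrFun hgρ (ρ.symm (τ' j))
        simpa using this
      simp [this, Equiv.trans_apply]
    have hτρ : τ = ρ := by
      have : τ'.trans τ.symm = τ'.trans ρ.symm := hf'.trans hg'.symm
      have h2 : τ.symm = ρ.symm := Equiv.ext fun x => by
        simpa using congrArg (fun e : Equiv.Perm (Fin n) => e (τ'.symm x)) this
      have := congrArg Equiv.symm h2
      simpa using this
    subst hτρ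
    have hfg2 : f = g := by
      funext x
      have := congrFun hfg (τ.symm x)
      simpa [hh] using this
    subst hfg2
    rfl
  · intro h
    set σ : Equiv.Perm (Fin n) := Tuple.sort h with hσ
    refine ⟨⟨σ.symm.trans τ', h ∘ (σ.symm.trans τ').symm, ?_⟩, ?_⟩
    · have : (StrictMono fun j : Fin n => toLex (h (σ j), σ j)) :=
        (cond_iff_sort h σ).2 rfl
      have hfun : (fun j : Fin n => toLex ((h ∘ (σ.symm.trans τ').symm) (τ' j),
          (σ.symm.trans τ').symm (τ' j))) = fun j => toLex (h (σ j), σ j) := by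
        funext j
        simp [Equiv.symm_trans_apply]
      rw [hfun]
      exact this
    · funext x
      simp [Equiv.symm_trans_apply]

/-- The uniform distribution on `S_n` is stationary for the inverse `a`-shuffle
chain with transition matrix `K(τ, τ') = ν(τ, τ')/aⁿ`. -/
theorem stmt13 (n a : ℕ) (ha : 2 ≤ a) :
    ∀ τ' : Equiv.Perm (Fin n),
      ∑ τ : Equiv.Perm (Fin n),
          (1 / (n.factorial : ℝ)) * ((shuffleNu n a τ τ' : ℝ) / (a : ℝ) ^ n)
        = 1 / (n.factorial : ℝ) := by
  intro τ'
  classical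
  have hsum : ∑ τ : Equiv.Perm (Fin n), shuffleNu n a τ τ' = a ^ n := by
    have e1 : ∀ τ : Equiv.Perm (Fin n), shuffleNu n a τ τ' =
        Fintype.card {f : Fin n → Fin a //
          StrictMono fun j : Fin n => toLex (f (τ' j), τ.symm (τ' j))} := fun τ =>
      Nat.card_eq_fintype_card
    calc ∑ τ : Equiv.Perm (Fin n), shuffleNu n a τ τ'
        = ∑ τ : Equiv.Perm (Fin n), Fintype.card {f : Fin n → Fin a //
            StrictMono fun j : Fin n => toLex (f (τ' j), τ.symm (τ' j))} :=
          Finset.sum_congr rfl fun τ _ => e1 τ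
      _ = Fintype.card (Σ τ : Equiv.Perm (Fin n), {f : Fin n → Fin a //
            StrictMono fun j : Fin n => toLex (f (τ' j), τ.symm (τ' j))}) :=
          Fintype.card_sigma.symm
      _ = Fintype.card (Fin n → Fin a) := Fintype.card_of_bijective (shuffle_bij τ')
      _ = a ^ n := by simp
  have ha' : (a : ℝ) ^ n ≠ 0 := by positivity
  rw [← Finset.mul_sum]
  have : ∑ τ : Equiv.Perm (Fin n), (shuffleNu n a τ τ' : ℝ) / (a : ℝ) ^ n = 1 := by
    rw [← Finset.sum_div]
    rw [div_eq_one_iff_eq ha']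
    exact_mod_cast hsum
  rw [this, mul_one]
end
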